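/- arXiv:2503.12223 — 6 statements merged into one kernel-verified Lean document; each statement's English description precedes it below -/
import Mathlib

section
/- Let P1 and P2 be non-empty finite posets such that P1 has no greatest element and P2 has no least element. If F is a (P2 * P1)-saturated family of subsets of [n], then F is also a (P2 * • * P1)-saturated family of subsets of [n]. -/
open Finset Filter

/-- An induced copy of the poset `α` inside the family `𝒜` of subsets of `Fin n`
(representing `[n] = {1,…,n}`): an injective map `f : α → Finset (Fin n)` with image
contained in `𝒜` such that `a ≤ b ↔ f a ⊆ f b`. -/
def IsInducedCopy {α : Type*} [PartialOrder α] {n : ℕ}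
    (𝒜 : Finset (Finset (Fin n))) (f : α → Finset (Fin n)) : Prop :=
  Function.Injective f ∧ (∀ a, f a ∈ 𝒜) ∧ ∀ a b : α, a ≤ b ↔ f a ⊆ f b

/-- The family `𝒜` contains an induced copy of the poset `α`. -/
def ContainsCopy (α : Type*) [PartialOrder α] {n : ℕ}
    (𝒜 : Finset (Finset (Fin n))) : Prop :=
  ∃ f : α → Finset (Fin n), IsInducedCopy 𝒜 f

/-- `𝒜` is an `α`-saturated family: it contains no induced copy of `α`, but adding any
set not in `𝒜` creates an induced copy of `α`. -/
def IsSaturatedFamily (α : Type*) [PartialOrder α] {n : ℕ}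
    (𝒜 : Finset (Finset (Fin n))) : Prop :=
  ¬ ContainsCopy α 𝒜 ∧
    ∀ S : Finset (Fin n), S ∉ 𝒜 → ContainsCopy α (insert S 𝒜)

/-- The induced saturation number `sat*(n, α)`: the minimum size of an `α`-saturated
family of subsets of `[n]`. -/
noncomputable def satStar (α : Type*) [PartialOrder α] (n : ℕ) : ℕ :=
  sInf {k : ℕ | ∃ 𝒜 : Finset (Finset (Fin n)), IsSaturatedFamily α 𝒜 ∧ 𝒜.card = k}

namespace Statement1Aux

open Sum

variable {P1 P2 : Type*} [PartialOrder P1] [PartialOrder P2] {n : ℕ}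

/-- The order-theoretic conditions for a pair of maps to form an induced copy of
`P1 ⊕ₗ P2` (memberships handled separately). -/
structure Pair (bot : P1 → Finset (Fin n)) (top : P2 → Finset (Fin n)) : Prop where
  botiff : ∀ p p', p ≤ p' ↔ bot p ⊆ bot p'
  topiff : ∀ q q', q ≤ q' ↔ top q ⊆ top q'
  cross : ∀ p q, bot p ⊆ top q
  ncross : ∀ p q, ¬ top q ⊆ bot p

variable {bot : P1 → Finset (Fin n)} {top : P2 → Finset (Fin n)}

lemma Pair.ne (h : Pair bot top) (p : P1) (q : P2) : bot p ≠ top q :=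
  fun e => h.ncross p q (by rw [e])

lemma inj_of_iff {α : Type*} [PartialOrder α] {f : α → Finset (Fin n)}
    (hf : ∀ a b : α, a ≤ b ↔ f a ⊆ f b) : Function.Injective f := fun a b e =>
  le_antisymm ((hf a b).2 (le_of_eq e)) ((hf b a).2 (le_of_eq e.symm))

lemma Pair.copyP {𝒜 : Finset (Finset (Fin n))} (h : Pair bot top)
    (hb : ∀ p, bot p ∈ 𝒜) (ht : ∀ q, top q ∈ 𝒜) :
    ContainsCopy (P1 ⊕ₗ P2) 𝒜 := by
  have hiff : ∀ a b : P1 ⊕ₗ P2,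
      a ≤ b ↔ (ofLex a).elim bot top ⊆ (ofLex b).elim bot top := by
    rintro (p | q) (p' | q')
    · exact Sum.Lex.inl_le_inl_iff.trans (h.botiff p p')
    · exact iff_of_true (Sum.Lex.inl_le_inr p q') (h.cross p q')
    · exact iff_of_false Sum.Lex.not_inr_le_inl (h.ncross p' q)
    · exact Sum.Lex.inr_le_inr_iff.trans (h.topiff q q')
  refine ⟨fun x => (ofLex x).elim bot top, inj_of_iff hiff, ?_, hiff⟩
  rintro (p | q)
  · exact hb p
  · exact ht q

lemma Pair.copyQ {𝒜 : Finset (Finset (Fin n))} (h : Pair bot top) (M : Finset (Fin n))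
    (hMb : ∀ p, bot p ⊆ M) (hMt : ∀ q, M ⊆ top q)
    (hMnb : ∀ p, M ≠ bot p) (hMnt : ∀ q, M ≠ top q)
    (hb : ∀ p, bot p ∈ 𝒜) (ht : ∀ q, top q ∈ 𝒜) (hM : M ∈ 𝒜) :
    ContainsCopy (P1 ⊕ₗ Unit ⊕ₗ P2) 𝒜 := by
  set g : (P1 ⊕ₗ Unit ⊕ₗ P2) → Finset (Fin n) :=
    fun x => (ofLex x).elim bot (fun y => (ofLex y).elim (fun _ => M) top) with hg
  have hiff : ∀ a b : P1 ⊕ₗ Unit ⊕ₗ P2, a ≤ b ↔ g a ⊆ g b := by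
    rintro (p | (u | q)) (p' | (u' | q'))
    · exact Sum.Lex.inl_le_inl_iff.trans (h.botiff p p')
    · exact iff_of_true (Sum.Lex.inl_le_inr _ _) (hMb p)
    · exact iff_of_true (Sum.Lex.inl_le_inr _ _) (h.cross p q')
    · exact iff_of_false Sum.Lex.not_inr_le_inl
        (fun hs => hMnb p' (subset_antisymm hs (hMb p')))
    · exact iff_of_true (Sum.Lex.inr_le_inr_iff.mpr
        (Sum.Lex.inl_le_inl_iff.mpr (le_of_eq (Subsingleton.elim u u')))) subset_rfl
    · exact iff_of_true (Sum.Lex.inr_le_inr_iff.mpr (Sum.Lex.inl_le_inr _ _)) (hMt q')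
    · exact iff_of_false Sum.Lex.not_inr_le_inl (h.ncross p' q)
    · exact iff_of_false (fun hle => Sum.Lex.not_inr_le_inl (Sum.Lex.inr_le_inr_iff.mp hle))
        (fun hs => hMnt q (subset_antisymm (hMt q) hs))
    · exact (Sum.Lex.inr_le_inr_iff.trans Sum.Lex.inr_le_inr_iff).trans (h.topiff q q')
  refine ⟨g, inj_of_iff hiff, ?_, hiff⟩
  rintro (p | (u | q))
  · exact hb p
  · exact hM
  · exact ht q

lemma pair_of_copy {𝒜 : Finset (Finset (Fin n))} {f : (P1 ⊕ₗ P2) → Finset (Fin n)}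
    (hf : IsInducedCopy 𝒜 f) :
    Pair (fun p => f (toLex (inl p))) (fun q => f (toLex (inr q))) where
  botiff p p' := Sum.Lex.inl_le_inl_iff.symm.trans (hf.2.2 _ _)
  topiff q q' := Sum.Lex.inr_le_inr_iff.symm.trans (hf.2.2 _ _)
  cross p q := (hf.2.2 _ _).1 (Sum.Lex.inl_le_inr p q)
  ncross p q hs := Sum.Lex.not_inr_le_inl ((hf.2.2 _ _).2 hs)

section Fin2
variable [Fintype P2]

lemma Pair.subset_inf (h : Pair bot top) (p : P1) : bot p ⊆ univ.inf top :=
  Finset.le_inf fun q _ => h.cross p q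

lemma inf_subset (top : P2 → Finset (Fin n)) (q : P2) : univ.inf top ⊆ top q :=
  Finset.inf_le (mem_univ q)

lemma Pair.inf_ne_bot (h : Pair bot top) (h1 : ¬ ∃ m : P1, IsTop m) (p : P1) :
    univ.inf top ≠ bot p := fun e =>
  h1 ⟨p, fun p' => (h.botiff p' p).2 (by rw [← e]; exact h.subset_inf p')⟩

lemma Pair.inf_ne_top (h : Pair bot top) (h2 : ¬ ∃ m : P2, IsBot m) (q : P2) :
    univ.inf top ≠ top q := fun e =>
  h2 ⟨q, fun q' => (h.topiff q q').2 (by rw [← e]; exact inf_subset top q')⟩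

end Fin2

section Fin1
variable [Fintype P1]

lemma subset_sup (bot : P1 → Finset (Fin n)) (p : P1) : bot p ⊆ univ.sup bot :=
  Finset.le_sup (mem_univ p)

lemma Pair.sup_subset (h : Pair bot top) (q : P2) : univ.sup bot ⊆ top q :=
  Finset.sup_le fun p _ => h.cross p q

lemma Pair.sup_ne_bot (h : Pair bot top) (h1 : ¬ ∃ m : P1, IsTop m) (p : P1) :
    univ.sup bot ≠ bot p := fun e =>
  h1 ⟨p, fun p' => (h.botiff p' p).2 (by rw [← e]; exact subset_sup bot p')⟩

lemma Pair.sup_ne_top (h : Pair bot top) (h2 : ¬ ∃ m : P2, IsBot m) (q : P2) :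
    univ.sup bot ≠ top q := fun e =>
  h2 ⟨q, fun q' => (h.topiff q q').2 (by rw [← e]; exact h.sup_subset q')⟩

end Fin1

end Statement1Aux

namespace Statement1Aux

variable {P1 P2 : Type*} [PartialOrder P1] [PartialOrder P2] {n : ℕ}
variable [Fintype P1] [Fintype P2]

open Sum

lemma propA (h1 : ¬ ∃ m : P1, IsTop m) (h2 : ¬ ∃ m : P2, IsBot m)
    {𝒜 : Finset (Finset (Fin n))} (h𝒜 : IsSaturatedFamily (P1 ⊕ₗ P2) 𝒜)
    (S : Finset (Fin n)) :
    ∀ k : ℕ, ∀ bot : P1 → Finset (Fin n), ∀ top : P2 → Finset (Fin n),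
      Pair bot top → (∀ p, bot p ∈ insert S 𝒜) → (∀ q, top q ∈ 𝒜) →
      n - (univ.inf top).card = k → ContainsCopy (P1 ⊕ₗ Unit ⊕ₗ P2) (insert S 𝒜) := by
  intro k
  induction k using Nat.strong_induction_on with
  | _ k IH =>
  intro bot top hP hb ht hk
  subst hk
  by_cases hV : univ.inf top ∈ insert S 𝒜
  · exact hP.copyQ (univ.inf top) hP.subset_inf (inf_subset top)
      (hP.inf_ne_bot h1) (hP.inf_ne_top h2) hb (fun q => mem_insert_of_mem (ht q)) hV
  · have hVA : univ.inf top ∉ 𝒜 := fun hh => hV (mem_insert_of_mem hh)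
    obtain ⟨ρ, hρ⟩ := h𝒜.2 _ hVA
    have hρP := pair_of_copy hρ
    set rb : P1 → Finset (Fin n) := fun p => ρ (toLex (inl p)) with hrbdef
    set rt : P2 → Finset (Fin n) := fun q => ρ (toLex (inr q)) with hrtdef
    have hrb : ∀ p, rb p ∈ insert (univ.inf top) 𝒜 := fun p => hρ.2.1 _
    have hrt : ∀ q, rt q ∈ insert (univ.inf top) 𝒜 := fun q => hρ.2.1 _
    by_cases hext : ∃ q₂, rt q₂ = univ.inf top
    · obtain ⟨q₂, hq₂⟩ := hext
      exfalso
      apply h𝒜.1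
      refine Pair.copyP ⟨hρP.botiff, hP.topiff, ?_, ?_⟩ ?_ ht
      · intro p q
        exact (hρP.cross p q₂).trans (hq₂ ▸ inf_subset top q)
      · intro p q hs
        have hbv : rb p = univ.inf top :=
          subset_antisymm (by rw [← hq₂]; exact hρP.cross p q₂)
            ((inf_subset top q).trans hs)
        exact hρP.ne p q₂ (hbv.trans hq₂.symm)
      · intro p
        rcases mem_insert.1 (hrb p) with he | hmem
        · exact absurd (he.trans hq₂.symm) (hρP.ne p q₂)
        · exact hmem
    · by_cases hexb : ∃ p₂, rb p₂ = univ.inf top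
      · obtain ⟨p₂, hp₂⟩ := hexb
        have hrt' : ∀ q, rt q ∈ 𝒜 := fun q => by
          rcases mem_insert.1 (hrt q) with he | hmem
          · exact absurd ⟨q, he⟩ hext
          · exact hmem
        have hPair' : Pair bot rt :=
          { botiff := hP.botiff, topiff := hρP.topiff,
            cross := fun p q => by
              have hx := hP.subset_inf p
              rw [← hp₂] at hx
              exact hx.trans (hρP.cross p₂ q),
            ncross := fun p q hs => by
              have hx := hs.trans (hP.subset_inf p)
              rw [← hp₂] at hx
              exact hρP.ncross p₂ q hx }
        have hsub : univ.inf top ⊂ univ.inf rt := by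
          refine Finset.ssubset_iff_subset_ne.mpr ⟨?_, ?_⟩
          · rw [← hp₂]; exact hρP.subset_inf p₂
          · intro e
            exact hρP.inf_ne_bot h1 p₂ (by rw [← e, hp₂])
        have hcard : (univ.inf top).card < (univ.inf rt).card := card_lt_card hsub
        have hle : (univ.inf rt).card ≤ n := by
          simpa using card_le_card (subset_univ (univ.inf rt))
        exact IH (n - (univ.inf rt).card)
          (Nat.sub_lt_sub_left (lt_of_lt_of_le hcard hle) hcard) bot rt hPair' hb hrt' rfl
      · exfalso
        apply h𝒜.1
        refine Pair.copyP hρP ?_ ?_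
        · intro p
          rcases mem_insert.1 (hrb p) with he | hmem
          · exact absurd ⟨p, he⟩ hexb
          · exact hmem
        · intro q
          rcases mem_insert.1 (hrt q) with he | hmem
          · exact absurd ⟨q, he⟩ hext
          · exact hmem

lemma propB (h1 : ¬ ∃ m : P1, IsTop m) (h2 : ¬ ∃ m : P2, IsBot m)
    {𝒜 : Finset (Finset (Fin n))} (h𝒜 : IsSaturatedFamily (P1 ⊕ₗ P2) 𝒜)
    (S : Finset (Fin n)) :
    ∀ k : ℕ, ∀ bot : P1 → Finset (Fin n), ∀ top : P2 → Finset (Fin n),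
      Pair bot top → (∀ p, bot p ∈ 𝒜) → (∀ q, top q ∈ insert S 𝒜) →
      (univ.sup bot).card = k → ContainsCopy (P1 ⊕ₗ Unit ⊕ₗ P2) (insert S 𝒜) := by
  intro k
  induction k using Nat.strong_induction_on with
  | _ k IH =>
  intro bot top hP hb ht hk
  subst hk
  by_cases hU : univ.sup bot ∈ insert S 𝒜
  · exact hP.copyQ (univ.sup bot) (subset_sup bot) hP.sup_subset
      (hP.sup_ne_bot h1) (hP.sup_ne_top h2) (fun p => mem_insert_of_mem (hb p)) ht hU
  · have hUA : univ.sup bot ∉ 𝒜 := fun hh => hU (mem_insert_of_mem hh)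
    obtain ⟨ρ, hρ⟩ := h𝒜.2 _ hUA
    have hρP := pair_of_copy hρ
    set rb : P1 → Finset (Fin n) := fun p => ρ (toLex (inl p)) with hrbdef
    set rt : P2 → Finset (Fin n) := fun q => ρ (toLex (inr q)) with hrtdef
    have hrb : ∀ p, rb p ∈ insert (univ.sup bot) 𝒜 := fun p => hρ.2.1 _
    have hrt : ∀ q, rt q ∈ insert (univ.sup bot) 𝒜 := fun q => hρ.2.1 _
    by_cases hexb : ∃ p₂, rb p₂ = univ.sup bot
    · obtain ⟨p₂, hp₂⟩ := hexb
      exfalso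
      apply h𝒜.1
      refine Pair.copyP ⟨hP.botiff, hρP.topiff, ?_, ?_⟩ hb ?_
      · intro p q
        exact (hp₂ ▸ subset_sup bot p).trans (hρP.cross p₂ q)
      · intro p q hs
        have htv : rt q = univ.sup bot :=
          subset_antisymm (hs.trans (subset_sup bot p))
            (by rw [← hp₂]; exact hρP.cross p₂ q)
        exact hρP.ne p₂ q (hp₂.trans htv.symm)
      · intro q
        rcases mem_insert.1 (hrt q) with he | hmem
        · exact absurd (hp₂.trans he.symm) (hρP.ne p₂ q)
        · exact hmem
    · by_cases hext : ∃ q₂, rt q₂ = univ.sup bot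
      · obtain ⟨q₂, hq₂⟩ := hext
        have hrb' : ∀ p, rb p ∈ 𝒜 := fun p => by
          rcases mem_insert.1 (hrb p) with he | hmem
          · exact absurd ⟨p, he⟩ hexb
          · exact hmem
        have hPair' : Pair rb top :=
          { botiff := hρP.botiff, topiff := hP.topiff,
            cross := fun p q => by
              have hx := hρP.cross p q₂
              rw [hq₂] at hx
              exact hx.trans (hP.sup_subset q),
            ncross := fun p q hs => by
              have hx := (hP.sup_subset q).trans hs
              rw [← hq₂] at hx
              exact hρP.ncross p q₂ hx }
        have hsub : univ.sup rb ⊂ univ.sup bot := by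
          refine Finset.ssubset_iff_subset_ne.mpr ⟨?_, ?_⟩
          · rw [← hq₂]; exact hρP.sup_subset q₂
          · intro e
            exact hρP.sup_ne_top h2 q₂ (by rw [e, hq₂])
        have hcard : (univ.sup rb).card < (univ.sup bot).card := card_lt_card hsub
        exact IH (univ.sup rb).card hcard rb top hPair' hrb' ht rfl
      · exfalso
        apply h𝒜.1
        refine Pair.copyP hρP ?_ ?_
        · intro p
          rcases mem_insert.1 (hrb p) with he | hmem
          · exact absurd ⟨p, he⟩ hexb
          · exact hmem
        · intro q
          rcases mem_insert.1 (hrt q) with he | hmem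
          · exact absurd ⟨q, he⟩ hext
          · exact hmem

end Statement1Aux

/-- If `P1`, `P2` are non-empty finite posets, `P1` has no greatest
element, `P2` has no least element, and `𝒜` is a `(P2 * P1)`-saturated family of subsets
of `[n]`, then `𝒜` is also `(P2 * • * P1)`-saturated. The linear sums (with `P1` at the
bottom) are encoded as `P1 ⊕ₗ P2` and `P1 ⊕ₗ Unit ⊕ₗ P2`. -/
theorem statement1 (P1 P2 : Type*) [PartialOrder P1] [Fintype P1] [Nonempty P1]
    [PartialOrder P2] [Fintype P2] [Nonempty P2]
    (h1 : ¬ ∃ m : P1, IsTop m) (h2 : ¬ ∃ m : P2, IsBot m)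
    {n : ℕ} (𝒜 : Finset (Finset (Fin n)))
    (h𝒜 : IsSaturatedFamily (P1 ⊕ₗ P2) 𝒜) :
    IsSaturatedFamily (P1 ⊕ₗ Unit ⊕ₗ P2) 𝒜 := by
  constructor
  · rintro ⟨g, hg⟩
    apply h𝒜.1
    have hpair : Statement1Aux.Pair (fun p => g (toLex (Sum.inl p)))
        (fun q => g (toLex (Sum.inr (toLex (Sum.inr q))))) :=
      { botiff := fun p p' => Sum.Lex.inl_le_inl_iff.symm.trans (hg.2.2 _ _),
        topiff := fun q q' =>
          (Sum.Lex.inr_le_inr_iff.trans Sum.Lex.inr_le_inr_iff).symm.trans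
            (hg.2.2 (toLex (Sum.inr (toLex (Sum.inr q))))
              (toLex (Sum.inr (toLex (Sum.inr q'))))),
        cross := fun p q => (hg.2.2 _ _).1 (Sum.Lex.inl_le_inr _ _),
        ncross := fun p q hs => Sum.Lex.not_inr_le_inl ((hg.2.2 _ _).2 hs) }
    exact hpair.copyP (fun p => hg.2.1 _) (fun q => hg.2.1 _)
  · intro S hS
    obtain ⟨φ, hφ⟩ := h𝒜.2 S hS
    have hφP := Statement1Aux.pair_of_copy hφ
    set fb : P1 → Finset (Fin n) := fun p => φ (toLex (Sum.inl p)) with hfb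
    set ft : P2 → Finset (Fin n) := fun q => φ (toLex (Sum.inr q)) with hft
    have hfbm : ∀ p, fb p ∈ insert S 𝒜 := fun p => hφ.2.1 _
    have hftm : ∀ q, ft q ∈ insert S 𝒜 := fun q => hφ.2.1 _
    by_cases hexb : ∃ p₀, fb p₀ = S
    · obtain ⟨p₀, hp₀⟩ := hexb
      have hft' : ∀ q, ft q ∈ 𝒜 := fun q => by
        rcases Finset.mem_insert.1 (hftm q) with he | hmem
        · exact absurd (hp₀.trans he.symm) (hφP.ne p₀ q)
        · exact hmem
      exact Statement1Aux.propA h1 h2 h𝒜 S _ fb ft hφP hfbm hft' rfl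
    · by_cases hext : ∃ q₀, ft q₀ = S
      · obtain ⟨q₀, hq₀⟩ := hext
        have hfb' : ∀ p, fb p ∈ 𝒜 := fun p => by
          rcases Finset.mem_insert.1 (hfbm p) with he | hmem
          · exact absurd ⟨p, he⟩ hexb
          · exact hmem
        exact Statement1Aux.propB h1 h2 h𝒜 S _ fb ft hφP hfb' hftm rfl
      · exfalso
        apply h𝒜.1
        refine hφP.copyP ?_ ?_
        · intro p
          rcases Finset.mem_insert.1 (hfbm p) with he | hmem
          · exact absurd ⟨p, he⟩ hexb
          · exact hmem
        · intro q
          rcases Finset.mem_insert.1 (hftm q) with he | hmem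
          · exact absurd ⟨q, he⟩ hext
          · exact hmem
end

section
/- Let P1 and P2 be non-empty finite posets such that P1 has no greatest element and P2 has no least element. Then sat*(n, P2 * P1) ≥ max{ sat*(n, P2 * •), sat*(n, • * P1) }, where • denotes the one-element poset. -/
/-!
Let `F` be a `P2 * P1`-saturated family of minimum size and `G ⊆ F` the sets of `F` lying
strictly below no induced copy of `P2` in `F`. Then `G` is `(P2 * •)`-saturated, whence
`sat*(n, P2 * •) ≤ |G| ≤ |F|`. Since `P2` has no least element, the intersection of a copy of
`P2` lies strictly below each of its members, which lets both copies of `P2` and sets above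
copies of `P1` be pushed down into `G`. The bound by `sat*(n, • * P1)` is the dual one, through
complementation.
-/

open Finset Filter

variable {n : ℕ}

theorem OrderEmbedding.univ_inf_lt {α β : Type*} [Preorder α] [Fintype α] [SemilatticeInf β]
    [OrderTop β] (e : α ↪o β) (hbot : ∀ m : α, ¬ IsBot m) (a : α) : univ.inf e < e a :=
  (inf_le (mem_univ a)).lt_of_ne fun h => hbot a fun b =>
    e.le_iff_le.1 <| by rw [← h]; exact inf_le (mem_univ b)

namespace IsInducedCopy

variable {α β : Type*} [PartialOrder α] [PartialOrder β] {𝒜 ℬ : Finset (Finset (Fin n))}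

theorem mono {f : α → Finset (Fin n)} (hf : IsInducedCopy 𝒜 f) (h : 𝒜 ⊆ ℬ) :
    IsInducedCopy ℬ f :=
  ⟨hf.1, fun a => h (hf.2.1 a), hf.2.2⟩

def orderEmbedding {f : α → Finset (Fin n)} (hf : IsInducedCopy 𝒜 f) : α ↪o Finset (Fin n) :=
  OrderEmbedding.ofMapLEIff f fun a b => (hf.2.2 a b).symm

theorem ssubset_of_lt {f : α → Finset (Fin n)} (hf : IsInducedCopy 𝒜 f) {a b : α} (h : a < b) :
    f a ⊂ f b :=
  hf.orderEmbedding.strictMono h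

theorem comp_orderEmbedding {f : β → Finset (Fin n)} (hf : IsInducedCopy 𝒜 f) (e : α ↪o β)
    (hmem : ∀ a, f (e a) ∈ ℬ) : IsInducedCopy ℬ (f ∘ e) :=
  ⟨hf.1.comp e.injective, hmem, fun _ _ => e.le_iff_le.symm.trans (hf.2.2 _ _)⟩

theorem const [Subsingleton α] {B : Finset (Fin n)} (hB : B ∈ 𝒜) :
    IsInducedCopy 𝒜 fun _ : α => B :=
  ⟨fun a b _ => Subsingleton.elim a b, fun _ => hB,
    fun a b => iff_of_true (Subsingleton.elim a b).le subset_rfl⟩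

theorem sumLex {f : α → Finset (Fin n)} {g : β → Finset (Fin n)} (hf : IsInducedCopy 𝒜 f)
    (hg : IsInducedCopy 𝒜 g) (hfg : ∀ a b, f a ⊂ g b) :
    IsInducedCopy 𝒜 fun x : α ⊕ₗ β => Sum.elim f g (ofLex x) := by
  refine ⟨?_, ?_, ?_⟩
  · rintro (a | a) (b | b) hab
    · rw [hf.1 hab]
    · exact absurd hab (hfg a b).ne
    · exact absurd hab (hfg b a).ne'
    · rw [hg.1 hab]
  · rintro (a | b)
    · exact hf.2.1 a
    · exact hg.2.1 b
  · rintro (a | a) (b | b)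
    · exact Sum.Lex.inl_le_inl_iff.trans (hf.2.2 a b)
    · exact iff_of_true (Sum.Lex.inl_le_inr a b) (hfg a b).subset
    · exact iff_of_false Sum.Lex.not_inr_le_inl (hfg b a).not_subset
    · exact Sum.Lex.inr_le_inr_iff.trans (hg.2.2 a b)

section SumLex

variable {f : α ⊕ₗ β → Finset (Fin n)}

theorem sumLexInl (hf : IsInducedCopy 𝒜 f) (hmem : ∀ a, f (Sum.inlₗ a) ∈ ℬ) :
    IsInducedCopy ℬ fun a => f (Sum.inlₗ a) :=
  hf.comp_orderEmbedding (OrderEmbedding.ofMapLEIff Sum.inlₗ fun _ _ => Sum.Lex.inl_le_inl_iff)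
    hmem

theorem sumLexInr (hf : IsInducedCopy 𝒜 f) (hmem : ∀ b, f (Sum.inrₗ b) ∈ ℬ) :
    IsInducedCopy ℬ fun b => f (Sum.inrₗ b) :=
  hf.comp_orderEmbedding (OrderEmbedding.ofMapLEIff Sum.inrₗ fun _ _ => Sum.Lex.inr_le_inr_iff)
    hmem

theorem inl_ssubset_inr (hf : IsInducedCopy 𝒜 f) (a : α) (b : β) :
    f (Sum.inlₗ a) ⊂ f (Sum.inrₗ b) :=
  hf.ssubset_of_lt (Sum.Lex.inl_lt_inr a b)

end SumLex

theorem univ_inf_ssubset [Fintype α] {f : α → Finset (Fin n)} (hf : IsInducedCopy 𝒜 f)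
    (hbot : ∀ m : α, ¬ IsBot m) (a : α) : univ.inf f ⊂ f a :=
  hf.orderEmbedding.univ_inf_lt hbot a

theorem exists_eq_of_insert {f : α → Finset (Fin n)} {S : Finset (Fin n)}
    (hfree : ¬ ContainsCopy α 𝒜) (hf : IsInducedCopy (insert S 𝒜) f) : ∃ a, f a = S := by
  by_contra! hS
  exact hfree ⟨f, hf.1, fun a => (mem_insert.1 (hf.2.1 a)).resolve_left (hS a), hf.2.2⟩

theorem mem_of_insert {f : α → Finset (Fin n)} {S : Finset (Fin n)}
    (hf : IsInducedCopy (insert S 𝒜) f) {a b : α} (ha : f a = S) (hb : b ≠ a) : f b ∈ 𝒜 :=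
  (mem_insert.1 (hf.2.1 b)).resolve_left fun h => hb (hf.1 (h.trans ha.symm))

end IsInducedCopy

section Transport

variable {α β : Type*} [PartialOrder α] [PartialOrder β] {𝒜 : Finset (Finset (Fin n))}

theorem ContainsCopy.of_orderEmbedding (e : α ↪o β) (h : ContainsCopy β 𝒜) :
    ContainsCopy α 𝒜 :=
  let ⟨f, hf⟩ := h
  ⟨f ∘ e, hf.comp_orderEmbedding e fun a => hf.2.1 (e a)⟩

theorem containsCopy_congr (e : α ≃o β) : ContainsCopy α 𝒜 ↔ ContainsCopy β 𝒜 :=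
  ⟨.of_orderEmbedding e.symm.toOrderEmbedding, .of_orderEmbedding e.toOrderEmbedding⟩

theorem isSaturatedFamily_congr (e : α ≃o β) : IsSaturatedFamily α 𝒜 ↔ IsSaturatedFamily β 𝒜 := by
  simp only [IsSaturatedFamily, containsCopy_congr e]

theorem satStar_congr (e : α ≃o β) : satStar α n = satStar β n := by
  simp only [satStar, isSaturatedFamily_congr e]

theorem image_compl_image_compl (𝒜 : Finset (Finset (Fin n))) :
    (𝒜.image compl).image compl = 𝒜 := by
  rw [image_image, compl_comp_compl, image_id]

theorem ContainsCopy.image_compl (h : ContainsCopy α 𝒜) : ContainsCopy αᵒᵈ (𝒜.image compl) := by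
  obtain ⟨f, hf⟩ := h
  refine ⟨fun a => (f (OrderDual.ofDual a))ᶜ, fun a b hab => hf.1 (compl_injective hab),
    fun a => mem_image_of_mem _ (hf.2.1 _), fun a b => ?_⟩
  exact (hf.2.2 _ _).trans compl_subset_compl.symm

theorem containsCopy_dual_image_compl_iff :
    ContainsCopy αᵒᵈ (𝒜.image compl) ↔ ContainsCopy α 𝒜 := by
  refine ⟨fun h => ?_, .image_compl⟩
  rw [containsCopy_congr (OrderIso.dualDual α), ← image_compl_image_compl 𝒜]
  exact h.image_compl

theorem IsSaturatedFamily.image_compl (h : IsSaturatedFamily α 𝒜) :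
    IsSaturatedFamily αᵒᵈ (𝒜.image compl) := by
  refine ⟨containsCopy_dual_image_compl_iff.not.2 h.1, fun S hS => ?_⟩
  have hSc : Sᶜ ∉ 𝒜 := fun h => hS (compl_compl S ▸ mem_image_of_mem _ h)
  simpa only [image_insert, compl_compl] using (h.2 Sᶜ hSc).image_compl

theorem isSaturatedFamily_dual_image_compl_iff :
    IsSaturatedFamily αᵒᵈ (𝒜.image compl) ↔ IsSaturatedFamily α 𝒜 := by
  refine ⟨fun h => ?_, .image_compl⟩
  rw [isSaturatedFamily_congr (OrderIso.dualDual α), ← image_compl_image_compl 𝒜]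
  exact h.image_compl

theorem satStar_orderDual (α : Type*) [PartialOrder α] : satStar αᵒᵈ n = satStar α n := by
  have hcompl : Function.Surjective fun 𝒜 : Finset (Finset (Fin n)) => 𝒜.image compl :=
    fun 𝒜 => ⟨𝒜.image compl, image_compl_image_compl 𝒜⟩
  unfold satStar
  congr 1
  ext k
  refine hcompl.exists.trans ?_
  simp only [isSaturatedFamily_dual_image_compl_iff, card_image_of_injective _ compl_injective]
  rfl

end Transport

theorem exists_isSaturatedFamily (α : Type*) [PartialOrder α] [Nonempty α] (n : ℕ) :
    ∃ 𝒜 : Finset (Finset (Fin n)), IsSaturatedFamily α 𝒜 := by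
  have hfree : ¬ ContainsCopy α (∅ : Finset (Finset (Fin n))) :=
    fun ⟨f, _, hf, _⟩ => notMem_empty _ (hf (Classical.arbitrary α))
  obtain ⟨𝒜, h𝒜, hmax⟩ := Set.exists_max_image {𝒜 | ¬ ContainsCopy α 𝒜} card
    (Set.toFinite _) ⟨∅, hfree⟩
  refine ⟨𝒜, h𝒜, fun S hS => by_contra fun h => ?_⟩
  have := hmax (insert S 𝒜) h
  rw [card_insert_of_notMem hS] at this
  omega

theorem exists_isSaturatedFamily_card_eq_satStar (α : Type*) [PartialOrder α] [Nonempty α]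
    (n : ℕ) : ∃ 𝒜 : Finset (Finset (Fin n)), IsSaturatedFamily α 𝒜 ∧ 𝒜.card = satStar α n :=
  have ⟨𝒜, h⟩ := exists_isSaturatedFamily α n
  Nat.sInf_mem (⟨𝒜.card, 𝒜, h, rfl⟩ :
    {k | ∃ 𝒜 : Finset (Finset (Fin n)), IsSaturatedFamily α 𝒜 ∧ 𝒜.card = k}.Nonempty)

theorem satStar_le_card {α : Type*} [PartialOrder α] {𝒜 : Finset (Finset (Fin n))}
    (h : IsSaturatedFamily α 𝒜) : satStar α n ≤ 𝒜.card :=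
  Nat.sInf_le ⟨𝒜, h, rfl⟩

section BelowCopy

variable (P : Type*) [PartialOrder P]

def IsBelowCopy (𝒜 : Finset (Finset (Fin n))) (A : Finset (Fin n)) : Prop :=
  ∃ g : P → Finset (Fin n), IsInducedCopy 𝒜 g ∧ ∀ p, A ⊂ g p

open Classical in
noncomputable def notBelowCopy (𝒜 : Finset (Finset (Fin n))) : Finset (Finset (Fin n)) :=
  𝒜.filter fun A => ¬ IsBelowCopy P 𝒜 A

variable {P} {𝒜 ℬ : Finset (Finset (Fin n))} {A : Finset (Fin n)}

theorem IsBelowCopy.mono (h : IsBelowCopy P 𝒜 A) (h𝒜 : 𝒜 ⊆ ℬ) : IsBelowCopy P ℬ A :=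
  let ⟨g, hg, hA⟩ := h
  ⟨g, hg.mono h𝒜, hA⟩

theorem mem_notBelowCopy : A ∈ notBelowCopy P 𝒜 ↔ A ∈ 𝒜 ∧ ¬ IsBelowCopy P 𝒜 A := by
  classical
  simp only [notBelowCopy, mem_filter]

theorem notBelowCopy_subset : notBelowCopy P 𝒜 ⊆ 𝒜 :=
  fun _ hA => (mem_notBelowCopy.1 hA).1

theorem containsCopy_sumLex_iff {U : Type*} [PartialOrder U] [Unique U] :
    ContainsCopy (U ⊕ₗ P) 𝒜 ↔ ∃ B ∈ 𝒜, IsBelowCopy P 𝒜 B := by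
  constructor
  · rintro ⟨f, hf⟩
    exact ⟨f (Sum.inlₗ default), hf.2.1 _, _, hf.sumLexInr fun _ => hf.2.1 _,
      hf.inl_ssubset_inr default⟩
  · rintro ⟨B, hB, g, hg, hBg⟩
    exact ⟨_, (IsInducedCopy.const (α := U) hB).sumLex hg fun _ => hBg⟩

/-- Among the copies of `P` above `A`, one whose intersection is largest lies inside
`notBelowCopy P 𝒜`: a copy above one of its members would have a larger intersection. -/
theorem isBelowCopy_notBelowCopy_iff [Fintype P] (hbot : ∀ m : P, ¬ IsBot m) :
    IsBelowCopy P (notBelowCopy P 𝒜) A ↔ IsBelowCopy P 𝒜 A := by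
  refine ⟨fun h => h.mono notBelowCopy_subset, fun h => ?_⟩
  obtain ⟨g, ⟨hg, hAg⟩, hmax⟩ := Set.exists_max_image
    {g : P → Finset (Fin n) | IsInducedCopy 𝒜 g ∧ ∀ p, A ⊂ g p} (fun g => (univ.inf g).card)
    (Set.toFinite _) h
  refine ⟨g, ⟨hg.1, fun p => mem_notBelowCopy.2 ⟨hg.2.1 p, fun ⟨g', hg', hpg'⟩ => ?_⟩, hg.2.2⟩,
    hAg⟩
  have hlt : (univ.inf g).card < (univ.inf g').card :=
    card_lt_card <| (hg.univ_inf_ssubset hbot p).trans_subset <|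
      Finset.le_inf fun p' _ => (hpg' p').subset
  exact (hmax g' ⟨hg', fun p' => (hAg p).trans (hpg' p')⟩).not_gt hlt

end BelowCopy

section Saturated

variable {P1 P2 : Type*} [PartialOrder P1] [PartialOrder P2] {F : Finset (Finset (Fin n))}

theorem not_isBelowCopy_of_copy_subset (hfree : ¬ ContainsCopy (P1 ⊕ₗ P2) F)
    {h : P1 → Finset (Fin n)} (hh : IsInducedCopy F h) {T : Finset (Fin n)}
    (hT : ∀ q, h q ⊆ T) : ¬ IsBelowCopy P2 F T :=
  fun ⟨_, hg, hTg⟩ => hfree ⟨_, hh.sumLex hg fun q p => (hT q).trans_ssubset (hTg p)⟩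

theorem IsInducedCopy.isBelowCopy_of_eq_inl {f : P1 ⊕ₗ P2 → Finset (Fin n)}
    {S : Finset (Fin n)} (hf : IsInducedCopy (insert S F) f) {q : P1} (hx : f (Sum.inlₗ q) = S) :
    IsBelowCopy P2 F S :=
  ⟨_, hf.sumLexInr fun _ => hf.mem_of_insert hx fun h => Sum.inr_ne_inl (toLex.injective h),
    fun p => hx ▸ hf.inl_ssubset_inr q p⟩

theorem IsInducedCopy.sumLexInl_of_eq_inr {f : P1 ⊕ₗ P2 → Finset (Fin n)}
    {S : Finset (Fin n)} (hf : IsInducedCopy (insert S F) f) {p : P2} (hx : f (Sum.inrₗ p) = S) :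
    IsInducedCopy F fun q => f (Sum.inlₗ q) :=
  hf.sumLexInl fun _ => hf.mem_of_insert hx fun h => Sum.inl_ne_inr (toLex.injective h)

variable [Fintype P2] (hbot : ∀ m : P2, ¬ IsBot m) (hF : IsSaturatedFamily (P1 ⊕ₗ P2) F)
include hbot hF

/-- If `T ∉ F`, the copy created by adding `T` has `T` in its top part (in its bottom part the
top part would be a copy of `P2` above `T`), and the intersection of that top part is a smaller
set lying above a copy of `P1` in `F`. -/
theorem exists_mem_notBelowCopy_subset {h : P1 → Finset (Fin n)} (hh : IsInducedCopy F h)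
    {T : Finset (Fin n)} (hT : ∀ q, h q ⊆ T) : ∃ B ∈ notBelowCopy P2 F, B ⊆ T := by
  induction T using Finset.strongInduction generalizing h with
  | _ T ih =>
    have hfree := not_isBelowCopy_of_copy_subset hF.1 hh hT
    by_cases hTF : T ∈ F
    · exact ⟨T, mem_notBelowCopy.2 ⟨hTF, hfree⟩, subset_rfl⟩
    obtain ⟨f, hf⟩ := hF.2 T hTF
    obtain ⟨q₀ | p₀, hx⟩ := hf.exists_eq_of_insert hF.1
    · exact absurd (hf.isBelowCopy_of_eq_inl hx) hfree
    have hT' : (univ.inf fun p => f (Sum.inrₗ p)) ⊂ T :=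
      hx ▸ (hf.sumLexInr fun p => hf.2.1 _).univ_inf_ssubset hbot p₀
    obtain ⟨B, hB, hBT⟩ := ih _ hT' (hf.sumLexInl_of_eq_inr hx)
      fun q => Finset.le_inf fun p _ => (hf.inl_ssubset_inr q p).subset
    exact ⟨B, hB, hBT.trans hT'.subset⟩

theorem isSaturatedFamily_notBelowCopy (U : Type*) [PartialOrder U] [Unique U] :
    IsSaturatedFamily (U ⊕ₗ P2) (notBelowCopy P2 F) := by
  refine ⟨fun hc => ?_, fun S hS => containsCopy_sumLex_iff.2 ?_⟩
  · obtain ⟨B, hB, hBc⟩ := containsCopy_sumLex_iff.1 hc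
    exact (mem_notBelowCopy.1 hB).2 ((isBelowCopy_notBelowCopy_iff hbot).1 hBc)
  have of_isBelowCopy (hSF : IsBelowCopy P2 F S) :
      ∃ B ∈ insert S (notBelowCopy P2 F), IsBelowCopy P2 (insert S (notBelowCopy P2 F)) B :=
    ⟨S, mem_insert_self _ _, ((isBelowCopy_notBelowCopy_iff hbot).2 hSF).mono (subset_insert _ _)⟩
  by_cases hSF : S ∈ F
  · exact of_isBelowCopy (not_not.1 fun h => hS (mem_notBelowCopy.2 ⟨hSF, h⟩))
  obtain ⟨f, hf⟩ := hF.2 S hSF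
  obtain ⟨q₀ | p₀, hx⟩ := hf.exists_eq_of_insert hF.1
  · exact of_isBelowCopy (hf.isBelowCopy_of_eq_inl hx)
  have hbottom := hf.sumLexInl_of_eq_inr hx
  have hbottom_le (p : P2) (q : P1) : f (Sum.inlₗ q) ⊆ f (Sum.inrₗ p) :=
    (hf.inl_ssubset_inr q p).subset
  obtain ⟨B, hB, hBT⟩ := exists_mem_notBelowCopy_subset hbot hF hbottom
    fun q => Finset.le_inf fun p _ => hbottom_le p q
  refine ⟨B, mem_insert_of_mem hB, _, hf.sumLexInr fun p => ?_, fun p =>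
    hBT.trans_ssubset ((hf.sumLexInr fun p => hf.2.1 _).univ_inf_ssubset hbot p)⟩
  by_cases hp : p = p₀
  · exact hp ▸ hx ▸ mem_insert_self _ _
  refine mem_insert_of_mem (mem_notBelowCopy.2 ⟨hf.mem_of_insert hx ?_, ?_⟩)
  · exact fun h => hp (Sum.inr_injective (toLex.injective h))
  · exact not_isBelowCopy_of_copy_subset hF.1 hbottom (hbottom_le p)

end Saturated

theorem satStar_sumLex_le (U : Type*) [PartialOrder U] [Unique U] (P1 P2 : Type*)
    [PartialOrder P1] [Nonempty P1] [PartialOrder P2] [Fintype P2]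
    (hbot : ∀ m : P2, ¬ IsBot m) (n : ℕ) : satStar (U ⊕ₗ P2) n ≤ satStar (P1 ⊕ₗ P2) n := by
  have : Nonempty (P1 ⊕ₗ P2) := ⟨Sum.inlₗ (Classical.arbitrary P1)⟩
  obtain ⟨F, hF, hcard⟩ := exists_isSaturatedFamily_card_eq_satStar (P1 ⊕ₗ P2) n
  calc satStar (U ⊕ₗ P2) n ≤ (notBelowCopy P2 F).card :=
        satStar_le_card (isSaturatedFamily_notBelowCopy hbot hF U)
    _ ≤ F.card := card_le_card notBelowCopy_subset
    _ = satStar (P1 ⊕ₗ P2) n := hcard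

/-- `P2 * P1` is encoded as `P1 ⊕ₗ P2`, `P2 * •` as `Unit ⊕ₗ P2` and `• * P1` as
`P1 ⊕ₗ Unit`. -/
theorem statement3 (P1 P2 : Type*) [PartialOrder P1] [Fintype P1] [Nonempty P1]
    [PartialOrder P2] [Fintype P2] [Nonempty P2]
    (h1 : ¬ ∃ m : P1, IsTop m) (h2 : ¬ ∃ m : P2, IsBot m) (n : ℕ) :
    max (satStar (Unit ⊕ₗ P2) n) (satStar (P1 ⊕ₗ Unit) n) ≤ satStar (P1 ⊕ₗ P2) n := by
  have h1' : ∀ m : P1ᵒᵈ, ¬ IsBot m := fun m hm => h1 ⟨OrderDual.ofDual m, hm⟩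
  refine max_le (satStar_sumLex_le Unit P1 P2 (not_exists.1 h2) n) ?_
  calc satStar (P1 ⊕ₗ Unit) n
      = satStar (Unitᵒᵈ ⊕ₗ P1ᵒᵈ) n := by
        rw [← satStar_orderDual, satStar_congr (OrderIso.sumLexDualAntidistrib P1 Unit)]
    _ ≤ satStar (P2ᵒᵈ ⊕ₗ P1ᵒᵈ) n := satStar_sumLex_le _ _ _ h1' n
    _ = satStar (P1 ⊕ₗ P2) n := by
        rw [← satStar_congr (OrderIso.sumLexDualAntidistrib P1 P2), satStar_orderDual]
end

section
/- Let P be a finite poset with the unique cover twin property that has a greatest element p. Then the poset P \ {p} (the induced subposet on the remaining elements) still has the unique cover twin property, and P \ {p} has no greatest element. -/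
open Finset Filter


/-- The unique cover twin property (UCTP): whenever `p2` covers `p1`, there exists an
element comparable with exactly one of `p1` and `p2`. -/
def UCTP (α : Type*) [PartialOrder α] : Prop :=
  ∀ p1 p2 : α, p1 ⋖ p2 →
    ∃ p3 : α, Xor' (p3 ≤ p1 ∨ p1 ≤ p3) (p3 ≤ p2 ∨ p2 ≤ p3)

/-- If `P` is a finite poset with the UCTP and greatest element `p`, and
`P \\ {p}` has at least two elements, then the induced subposet `P \\ {p}` still has the
UCTP and has no greatest element. -/
theorem statement4 (P : Type*) [PartialOrder P] [Fintype P]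
    (hP : UCTP P) (p : P) (hp : IsTop p)
    (hcard : 2 ≤ Nat.card {x : P // x ≠ p}) :
    UCTP {x : P // x ≠ p} ∧ ¬ ∃ m : {x : P // x ≠ p}, IsTop m := by
  constructor
  · intro a b hab
    have hab' : (a : P) ⋖ (b : P) := by
      constructor
      · exact hab.1
      · intro z hz1 hz2
        have hzp : z ≠ p := ne_of_lt (lt_of_lt_of_le hz2 (hp b))
        exact hab.2 (show a < (⟨z, hzp⟩ : {x : P // x ≠ p}) from Subtype.mk_lt_mk.2 hz1)
          (Subtype.mk_lt_mk.2 hz2)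
    obtain ⟨p3, h3⟩ := hP a b hab'
    have h3p : p3 ≠ p := by
      rintro rfl
      rcases h3 with ⟨_, h⟩ | ⟨_, h⟩
      · exact h (Or.inr (hp b))
      · exact h (Or.inr (hp a))
    exact ⟨⟨p3, h3p⟩, h3⟩
  · rintro ⟨m, hm⟩
    have hmp : (m : P) ⋖ p := by
      refine ⟨lt_of_le_of_ne (hp m) m.2, fun z hz1 hz2 => ?_⟩
      exact absurd (Subtype.coe_le_coe.2 (hm ⟨z, ne_of_lt hz2⟩)) hz1.not_ge
    obtain ⟨p3, h3⟩ := hP m p hmp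
    have hl : ¬(p3 ≤ (m : P) ∨ (m : P) ≤ p3) := by
      rcases h3 with ⟨h, hr⟩ | ⟨_, hnl⟩
      · exact absurd (Or.inl (hp p3)) hr
      · exact hnl
    have h3p : p3 ≠ p := fun h => hl (Or.inr (h ▸ hp m))
    exact hl (Or.inl (Subtype.coe_le_coe.2 (hm ⟨p3, h3p⟩)))
end

section
/- Let P be a special poset, with P' the poset obtained from P by removing the element incomparable to everything. Let k be the smallest natural number such that the power set of [k] (ordered by inclusion) contains an induced copy of P', and let h be the smallest natural number such that the power set of [h] contains an induced copy of P. Then h = k + 2. -/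
open Finset Filter


/-- The power set of `[m]` (ordered by inclusion) contains an induced copy of the
poset `α`. -/
def ContainsCopyIn (α : Type*) [PartialOrder α] (m : ℕ) : Prop :=
  ∃ f : α → Finset (Fin m), Function.Injective f ∧ ∀ a b : α, a ≤ b ↔ f a ⊆ f b

lemma containsCopy_of_subset {α : Type*} [PartialOrder α] {m : ℕ} {s : Finset (Fin m)}
    (f : α → Finset (Fin m)) (hf : Function.Injective f)
    (hiff : ∀ a b : α, a ≤ b ↔ f a ⊆ f b) (hsub : ∀ a, f a ⊆ s) :
    ContainsCopyIn α s.card := by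
  classical
  let e := s.equivFin
  set g : α → Finset (Fin s.card) :=
    fun a => ((f a).subtype (· ∈ s)).map e.toEmbedding with hg
  have hsubiff : ∀ a b : α,
      ((f a).subtype (· ∈ s)) ⊆ ((f b).subtype (· ∈ s)) ↔ f a ⊆ f b := by
    intro a b
    constructor
    · intro hs x hx
      have : (⟨x, hsub a hx⟩ : {y // y ∈ s}) ∈ (f a).subtype (· ∈ s) := by
        simp [Finset.mem_subtype, hx]
      have := hs this
      simpa [Finset.mem_subtype] using this
    · intro hs x hx
      simp only [Finset.mem_subtype] at hx ⊢
      exact hs hx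
  refine ⟨g, ?_, ?_⟩
  · intro a b hab
    have h1 : ((f a).subtype (· ∈ s)) = ((f b).subtype (· ∈ s)) :=
      Finset.map_injective e.toEmbedding hab
    apply hf
    apply Finset.Subset.antisymm
    · exact (hsubiff a b).1 h1.le
    · exact (hsubiff b a).1 h1.ge
  · intro a b
    rw [hiff a b, hg]
    simp only [Finset.map_subset_map]
    exact (hsubiff a b).symm

/-- Let `P` be a special poset: `z` is incomparable to every other
element, and the rest `P' = {x // x ≠ z}` has a greatest and a least element. If `k` is
the smallest natural number such that the power set of `[k]` contains an induced copy of
`P'`, and `h` is the smallest natural number such that the power set of `[h]` contains an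
induced copy of `P`, then `h = k + 2`. -/
theorem statement8 (P : Type*) [PartialOrder P] [Fintype P] (z : P)
    (hz : ∀ x : P, x ≠ z → ¬ x ≤ z ∧ ¬ z ≤ x)
    (htop : ∃ t : {x : P // x ≠ z}, IsTop t)
    (hbot : ∃ b : {x : P // x ≠ z}, IsBot b)
    (k : ℕ) (hk : ContainsCopyIn {x : P // x ≠ z} k)
    (hkmin : ∀ j : ℕ, ContainsCopyIn {x : P // x ≠ z} j → k ≤ j)
    (h : ℕ) (hh : ContainsCopyIn P h)
    (hhmin : ∀ j : ℕ, ContainsCopyIn P j → h ≤ j) :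
    h = k + 2 := by
  classical
  obtain ⟨t, ht⟩ := htop
  obtain ⟨bo, hb⟩ := hbot
  -- Upper bound: h ≤ k + 2
  have hupper : h ≤ k + 2 := by
    obtain ⟨f, hfinj, hfiff⟩ := hk
    let c : Fin k ↪ Fin (k + 2) :=
      ⟨fun x => ⟨x.1, by omega⟩, fun x y hxy => Fin.ext (by
        simpa using congrArg Fin.val hxy)⟩
    let i0 : Fin (k + 2) := ⟨k, by omega⟩
    let i1 : Fin (k + 2) := ⟨k + 1, by omega⟩
    have hclt : ∀ (s : Finset (Fin k)) (x : Fin (k + 2)), x ∈ s.map c → x.1 < k := by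
      intro s x hx
      rw [Finset.mem_map] at hx
      obtain ⟨y, _, rfl⟩ := hx
      exact y.2
    let g : P → Finset (Fin (k + 2)) := fun x =>
      if hx : x = z then {i1} else insert i0 ((f ⟨x, hx⟩).map c)
    apply hhmin
    refine ⟨g, ?_, ?_⟩
    · intro a b hab
      by_cases ha : a = z <;> by_cases hbz : b = z
      · rw [ha, hbz]
      · exfalso
        simp only [g, dif_pos ha, dif_neg hbz] at hab
        have : i0 ∈ ({i1} : Finset (Fin (k + 2))) := by
          rw [hab]; exact Finset.mem_insert_self _ _
        simp only [Finset.mem_singleton, i0, i1] at this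
        exact absurd (congrArg Fin.val this) (by simp)
      · exfalso
        simp only [g, dif_pos hbz, dif_neg ha] at hab
        have : i0 ∈ ({i1} : Finset (Fin (k + 2))) := by
          rw [← hab]; exact Finset.mem_insert_self _ _
        simp only [Finset.mem_singleton, i0, i1] at this
        exact absurd (congrArg Fin.val this) (by simp)
      · simp only [g, dif_neg ha, dif_neg hbz] at hab
        have hmaps : (f ⟨a, ha⟩).map c = (f ⟨b, hbz⟩).map c := by
          apply Finset.Subset.antisymm
          · intro x hx
            have hxk := hclt _ x hx
            have : x ∈ insert i0 ((f ⟨b, hbz⟩).map c) := by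
              rw [← hab]; exact Finset.mem_insert_of_mem hx
            rcases Finset.mem_insert.1 this with h' | h'
            · exfalso; rw [h'] at hxk; simp [i0] at hxk
            · exact h'
          · intro x hx
            have hxk := hclt _ x hx
            have : x ∈ insert i0 ((f ⟨a, ha⟩).map c) := by
              rw [hab]; exact Finset.mem_insert_of_mem hx
            rcases Finset.mem_insert.1 this with h' | h'
            · exfalso; rw [h'] at hxk; simp [i0] at hxk
            · exact h'
        have := hfinj (Finset.map_injective c hmaps)
        exact congrArg Subtype.val this
    · intro a b
      by_cases ha : a = z <;> by_cases hbz : b = z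
      · subst ha; subst hbz; simp [g]
      · subst ha
        simp only [g, dif_pos rfl, dif_neg hbz]
        constructor
        · intro hle; exact absurd hle (hz b hbz).2
        · intro hsub
          exfalso
          have : i1 ∈ insert i0 ((f ⟨b, hbz⟩).map c) :=
            hsub (Finset.mem_singleton_self i1)
          rcases Finset.mem_insert.1 this with h' | h'
          · exact absurd (congrArg Fin.val h') (by simp [i0, i1])
          · have := hclt _ i1 h'; simp [i1] at this
      · subst hbz
        simp only [g, dif_pos rfl, dif_neg ha]
        constructor
        · intro hle; exact absurd hle (hz a ha).1
        · intro hsub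
          exfalso
          have : i0 ∈ ({i1} : Finset (Fin (k + 2))) :=
            hsub (Finset.mem_insert_self _ _)
          simp only [Finset.mem_singleton] at this
          exact absurd (congrArg Fin.val this) (by simp [i0, i1])
      · simp only [g, dif_neg ha, dif_neg hbz]
        have : a ≤ b ↔ (⟨a, ha⟩ : {x : P // x ≠ z}) ≤ ⟨b, hbz⟩ := Iff.rfl
        rw [this, hfiff]
        constructor
        · intro hsub
          exact Finset.insert_subset_insert _ ((Finset.map_subset_map).2 hsub)
        · intro hsub
          rw [← Finset.map_subset_map (f := c)]
          intro x hx
          have hxk := hclt _ x hx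
          have : x ∈ insert i0 ((f ⟨b, hbz⟩).map c) :=
            hsub (Finset.mem_insert_of_mem hx)
          rcases Finset.mem_insert.1 this with h' | h'
          · exfalso; rw [h'] at hxk; simp [i0] at hxk
          · exact h'
  -- Lower bound: k + 2 ≤ h
  have hlower : k + 2 ≤ h := by
    obtain ⟨f, hfinj, hfiff⟩ := hh
    -- z not ≤ t, so there is i ∈ f z with i ∉ f t
    have h1 : ¬ f z ⊆ f t.1 := fun hc => (hz t.1 t.2).2 ((hfiff z t.1).2 hc)
    have h2 : ¬ f bo.1 ⊆ f z := fun hc => (hz bo.1 bo.2).1 ((hfiff bo.1 z).2 hc)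
    obtain ⟨i, hiz, hit⟩ := Finset.not_subset.1 h1
    obtain ⟨i', hib, hiz'⟩ := Finset.not_subset.1 h2
    have hii' : i ≠ i' := fun hc => hiz' (hc ▸ hiz)
    have hinotin : ∀ x : {x : P // x ≠ z}, i ∉ f x.1 := by
      intro x hx
      exact hit ((hfiff x.1 t.1).1 (ht x) hx)
    have hi'in : ∀ x : {x : P // x ≠ z}, i' ∈ f x.1 := by
      intro x
      exact (hfiff bo.1 x.1).1 (hb x) hib
    set s : Finset (Fin h) := ({i, i'} : Finset (Fin h))ᶜ with hs
    have hscard : s.card = h - 2 := by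
      rw [hs, Finset.card_compl, Finset.card_insert_of_notMem (by simpa using hii'),
        Finset.card_singleton]
      simp
    have hP'copy : ContainsCopyIn {x : P // x ≠ z} (h - 2) := by
      rw [← hscard]
      refine containsCopy_of_subset (fun x => (f x.1).erase i') ?_ ?_ ?_
      · intro a b hab
        have : f a.1 = f b.1 := by
          have ha' := Finset.insert_erase (hi'in a)
          have hb' := Finset.insert_erase (hi'in b)
          rw [← ha', ← hb', show (f a.1).erase i' = (f b.1).erase i' from hab]
        exact Subtype.ext (hfinj this)
      · intro a b
        have : a ≤ b ↔ a.1 ≤ b.1 := Iff.rfl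
        rw [this, hfiff]
        constructor
        · intro hsub
          exact Finset.erase_subset_erase _ hsub
        · intro hsub x hx
          by_cases hxi : x = i'
          · rw [hxi]; exact hi'in b
          · have : x ∈ (f a.1).erase i' := Finset.mem_erase.2 ⟨hxi, hx⟩
            exact Finset.mem_of_mem_erase (hsub this)
      · intro a x hx
        have hx' := Finset.mem_of_mem_erase hx
        have hxi' : x ≠ i' := (Finset.mem_erase.1 hx).1
        have hxi : x ≠ i := fun hc => hinotin a (hc ▸ hx')
        rw [hs]
        simp [hxi, hxi']
    have hk2 : k ≤ h - 2 := hkmin _ hP'copy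
    have hh2 : 2 ≤ h := by
      have := i.2
      have := i'.2
      have : (i : ℕ) ≠ (i' : ℕ) := fun hc => hii' (Fin.ext hc)
      omega
    omega
  omega
end

section
/- For any finite poset P, there exists a finite poset P* such that |P*| ≤ |P| + 3, P* contains P as an induced subposet, and sat*(n, P*) = O(n), i.e. there is a constant C with sat*(n, P*) ≤ C · n for all sufficiently large n. -/
open Finset Filter

/-!
Take `P*` to be `P` with a new top `t`, a new point `x` incomparable to `P ∪ {t}`, and a new
bottom. Cut `[n]` into windows of length `w = 2|P| + 1`. The base family consists of the initial
segments ending at window boundaries together with, inside each window, two blocks, each an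
induced copy of `P` squeezed between the two boundary segments of the window. It contains no copy
of `P*`: the images of `x`, `t` and `P` must all lie in one window and those of `t` and `P` in
one block, which has only `|P|` members. On the other hand, a set that is not squeezed between
the boundary segments of some window completes a copy of `P*` using a block of the window of its
least missing point. So a maximal `P*`-free family between the base family and the family of all
squeezed sets is saturated, and it has at most `n 2^w` members.
-/

namespace OrderEmbedding

variable {α β γ : Type*} [PartialOrder α] [PartialOrder β] [Preorder γ]

def withBotElim (f : α ↪o γ) (c : γ) (hc : ∀ a, c < f a) : WithBot α ↪o γ :=
  ofMapLEIff (WithBot.recBotCoe c f) fun x y => by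
    induction x using WithBot.recBotCoe <;> induction y using WithBot.recBotCoe <;>
      simp [(hc _).le, (hc _).not_ge]

def withTopElim (f : α ↪o γ) (c : γ) (hc : ∀ a, f a < c) : WithTop α ↪o γ :=
  ofMapLEIff (WithTop.recTopCoe c f) fun x y => by
    induction x using WithTop.recTopCoe <;> induction y using WithTop.recTopCoe <;>
      simp [(hc _).le, (hc _).not_ge]

def sumElim (f : α ↪o γ) (g : β ↪o γ) (h : ∀ a b, IncompRel (· ≤ ·) (f a) (g b)) :
    α ⊕ β ↪o γ :=
  ofMapLEIff (Sum.elim f g) fun x y => by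
    rcases x with a | b <;> rcases y with a' | b' <;> simp [(h _ _).1, (h _ _).2]

end OrderEmbedding

theorem Fintype.card_withTop (α : Type*) [Fintype α] :
    Fintype.card (WithTop α) = Fintype.card α + 1 :=
  Fintype.card_option

section Copies

variable {α : Type*} [PartialOrder α] {n : ℕ} {𝒜 ℬ : Finset (Finset (Fin n))}

theorem containsCopy_iff :
    ContainsCopy α 𝒜 ↔ ∃ e : α ↪o Finset (Fin n), ∀ a, e a ∈ 𝒜 := by
  constructor
  · rintro ⟨f, -, hf𝒜, hf⟩
    exact ⟨OrderEmbedding.ofMapLEIff f fun a b => (hf a b).symm, hf𝒜⟩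
  · rintro ⟨e, he⟩
    exact ⟨e, e.injective, he, fun a b => e.le_iff_le.symm⟩

theorem ContainsCopy.mono (h : 𝒜 ⊆ ℬ) (hc : ContainsCopy α 𝒜) : ContainsCopy α ℬ := by
  obtain ⟨f, hinj, hf𝒜, hf⟩ := hc
  exact ⟨f, hinj, fun a => h (hf𝒜 a), hf⟩

theorem exists_isSaturatedFamily_subset (hℬ𝒜 : ℬ ⊆ 𝒜) (hℬ : ¬ ContainsCopy α ℬ)
    (h𝒜 : ∀ S ∉ 𝒜, ContainsCopy α (insert S ℬ)) :
    ∃ 𝒢 ⊆ 𝒜, IsSaturatedFamily α 𝒢 := by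
  classical
  obtain ⟨𝒢, h𝒢, hmax⟩ := exists_max_image
    (𝒜.powerset.filter fun 𝒢 => ℬ ⊆ 𝒢 ∧ ¬ ContainsCopy α 𝒢) card ⟨ℬ, by simp [hℬ𝒜, hℬ]⟩
  simp only [mem_filter, mem_powerset] at h𝒢
  obtain ⟨h𝒢𝒜, hℬ𝒢, h𝒢⟩ := h𝒢
  refine ⟨𝒢, h𝒢𝒜, h𝒢, fun S hS => ?_⟩
  by_cases hS𝒜 : S ∈ 𝒜
  · by_contra hno
    have := hmax (insert S 𝒢) (by simp [insert_subset hS𝒜 h𝒢𝒜, hℬ𝒢.trans (subset_insert _ _), hno])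
    rw [card_insert_of_notMem hS] at this
    omega
  · exact (h𝒜 S hS𝒜).mono (insert_subset_insert _ hℬ𝒢)

theorem satStar_le_card_s9 (hℬ𝒜 : ℬ ⊆ 𝒜) (hℬ : ¬ ContainsCopy α ℬ)
    (h𝒜 : ∀ S ∉ 𝒜, ContainsCopy α (insert S ℬ)) : satStar α n ≤ #𝒜 := by
  obtain ⟨𝒢, h𝒢𝒜, h𝒢⟩ := exists_isSaturatedFamily_subset hℬ𝒜 hℬ h𝒜
  calc satStar α n ≤ #𝒢 := Nat.sInf_le ⟨𝒢, h𝒢, rfl⟩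
    _ ≤ #𝒜 := card_le_card h𝒢𝒜

end Copies

section Segments

variable {n t t' : ℕ}

def seg (n t : ℕ) : Finset (Fin n) := {x : Fin n | (x : ℕ) < t}

@[simp] theorem mem_seg {x : Fin n} : x ∈ seg n t ↔ (x : ℕ) < t := by simp [seg]

@[gcongr] theorem seg_subset_seg (h : t ≤ t') : seg n t ⊆ seg n t' := by
  intro x
  simp only [mem_seg]
  omega

theorem card_seg : #(seg n t) = min n t := Fin.card_filter_val_lt

end Segments

/-- The poset `P*` of the theorem. -/
abbrev Augmented (P : Type) := WithBot (WithTop P ⊕ Unit)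

namespace Augmented

theorem card_eq {P : Type} [Fintype P] : Nat.card (Augmented P) = Nat.card P + 3 := by
  simp [WithBot, WithTop, Nat.card_eq_fintype_card]

section Poset

variable {P : Type} [PartialOrder P]

def embedding : P ↪o Augmented P :=
  OrderEmbedding.ofMapLEIff (fun p => ↑(Sum.inl (p : WithTop P) : WithTop P ⊕ Unit)) (by simp)

theorem containsCopy_of_ssubset_of_incompRel {n : ℕ} {𝒜 : Finset (Finset (Fin n))}
    {A B S : Finset (Fin n)} (w : P ↪o Finset (Fin n)) (hA : A ∈ 𝒜) (hB : B ∈ 𝒜) (hS : S ∈ 𝒜)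
    (hw : ∀ p, w p ∈ 𝒜) (hAB : A ⊂ B) (hAS : A ⊂ S) (hAw : ∀ p, A ⊂ w p) (hwB : ∀ p, w p ⊂ B)
    (hBS : IncompRel (· ≤ ·) B S) (hwS : ∀ p, IncompRel (· ≤ ·) (w p) S) :
    ContainsCopy (Augmented P) 𝒜 := by
  let wt := w.withTopElim B hwB
  let wx := wt.sumElim (OrderEmbedding.ofMapLEIff (fun _ : Unit => S) (by simp))
    (by rintro (_ | p) -; exacts [hBS, hwS p])
  have hAwx : ∀ v, A < wx v := by
    rintro ((_ | p) | -)
    exacts [hAB, hAw p, hAS]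
  refine containsCopy_iff.2 ⟨wx.withBotElim A hAwx, ?_⟩
  rintro (_ | (_ | p) | -)
  exacts [hA, hB, hw p, hS]

end Poset

variable (P : Type) [Fintype P] (n : ℕ)

def width : ℕ := Fintype.card (Bool × P) + 1

/-- Window `a` consists of the points `[a * width P, (a + 1) * width P)`; in it, block `i`
reserves one point for each element of `P`. -/
noncomputable def slot (a : ℕ) (ir : Bool × P) : ℕ :=
  a * width P + Fintype.equivFin (Bool × P) ir

def windowFamily : Finset (Finset (Fin n)) :=
  (range n).biUnion fun a => Icc (seg n (a * width P)) (seg n ((a + 1) * width P))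

section Windows

variable {P n}

theorem width_pos : 0 < width P := Nat.succ_pos _

theorem le_slot (a : ℕ) (ir : Bool × P) : a * width P ≤ slot P a ir := Nat.le_add_right _ _

theorem slot_lt (a : ℕ) (ir : Bool × P) : slot P a ir < (a + 1) * width P := by
  have := (Fintype.equivFin (Bool × P) ir).isLt
  simp only [slot, width] at *
  rw [add_mul, one_mul]
  omega

theorem slot_injective (a : ℕ) : Function.Injective (slot P a) := fun _ _ h =>
  (Fintype.equivFin _).injective (Fin.ext (Nat.add_left_cancel h))

/-- A point is a slot of at most one block, so some block avoids it. -/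
theorem exists_block_forall_slot_ne (a k : ℕ) : ∃ i : Bool, ∀ r : P, slot P a (i, r) ≠ k := by
  by_contra! h
  obtain ⟨r, hr⟩ := h true
  obtain ⟨r', hr'⟩ := h false
  simpa using slot_injective a (hr.trans hr'.symm)

theorem mem_windowFamily {X : Finset (Fin n)} :
    X ∈ windowFamily P n ↔
      ∃ a < n, seg n (a * width P) ⊆ X ∧ X ⊆ seg n ((a + 1) * width P) := by
  simp [windowFamily]

theorem univ_mem_windowFamily (hn : 0 < n) : univ ∈ windowFamily P n := by
  refine mem_windowFamily.2 ⟨n - 1, by omega, subset_univ _, fun x _ => mem_seg.2 ?_⟩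
  have := Nat.le_mul_of_pos_right n (width_pos (P := P))
  rw [Nat.sub_add_cancel hn]
  omega

theorem card_windowFamily_le : #(windowFamily P n) ≤ n * 2 ^ width P := by
  refine card_biUnion_le.trans <|
    (sum_le_card_nsmul _ _ (2 ^ width P) fun a _ => ?_).trans_eq (by simp)
  rw [card_Icc_finset (seg_subset_seg (by gcongr; omega)), card_seg, card_seg]
  gcongr
  · omega
  · rw [add_mul, one_mul]
    omega

end Windows

variable [PartialOrder P]

open scoped Classical in
/-- Deleting from the segment ending at the top of window `a` the slots of the up-set of `p` in
block `i` gives a copy of `P`. -/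
noncomputable def windowSet (a : ℕ) (i : Bool) (p : P) : Finset (Fin n) :=
  {x : Fin n | (x : ℕ) < (a + 1) * width P ∧ ∀ r, p ≤ r → (x : ℕ) ≠ slot P a (i, r)}

noncomputable def baseFamily : Finset (Finset (Fin n)) :=
  (range n).image (fun c => seg n (c * width P)) ∪
    (range (n / width P) ×ˢ univ).image fun x : ℕ × Bool × P => windowSet P n x.1 x.2.1 x.2.2

variable {P n}

theorem mem_windowSet {a : ℕ} {i : Bool} {p : P} {x : Fin n} :
    x ∈ windowSet P n a i p ↔
      (x : ℕ) < (a + 1) * width P ∧ ∀ r, p ≤ r → (x : ℕ) ≠ slot P a (i, r) := by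
  simp [windowSet]

theorem seg_subset_windowSet (a : ℕ) (i : Bool) (p : P) :
    seg n (a * width P) ⊆ windowSet P n a i p := by
  intro x hx
  rw [mem_seg] at hx
  refine mem_windowSet.2 ⟨hx.trans_le (by gcongr; omega), fun r _ => ?_⟩
  have := le_slot a (i, r)
  omega

theorem windowSet_subset_seg (a : ℕ) (i : Bool) (p : P) :
    windowSet P n a i p ⊆ seg n ((a + 1) * width P) :=
  fun _ hx => mem_seg.2 (mem_windowSet.1 hx).1

theorem windowSet_subset_windowSet_iff {a : ℕ} (ha : (a + 1) * width P ≤ n) {i i' : Bool}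
    {p p' : P} : windowSet P n a i p ⊆ windowSet P n a i' p' ↔ i = i' ∧ p ≤ p' := by
  constructor
  · intro h
    let k : Fin n := ⟨slot P a (i', p'), (slot_lt a _).trans_le ha⟩
    have hk : k ∉ windowSet P n a i p := fun hk =>
      (mem_windowSet.1 (h hk)).2 p' le_rfl rfl
    simp only [mem_windowSet, not_and, not_forall, not_not] at hk
    obtain ⟨r, hpr, hr⟩ := hk (slot_lt a _)
    obtain ⟨rfl, rfl⟩ := Prod.ext_iff.1 (slot_injective a hr)
    exact ⟨rfl, hpr⟩
  · rintro ⟨rfl, hpp'⟩ x hx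
    rw [mem_windowSet] at hx ⊢
    exact ⟨hx.1, fun r hr => hx.2 r (hpp'.trans hr)⟩

noncomputable def windowEmbedding {a : ℕ} (ha : (a + 1) * width P ≤ n) (i : Bool) :
    P ↪o Finset (Fin n) :=
  OrderEmbedding.ofMapLEIff (windowSet P n a i) fun _ _ =>
    (windowSet_subset_windowSet_iff ha).trans (and_iff_right rfl)

theorem mem_baseFamily {X : Finset (Fin n)} :
    X ∈ baseFamily P n ↔ (∃ c < n, seg n (c * width P) = X) ∨
      ∃ a i p, (a + 1) * width P ≤ n ∧ windowSet P n a i p = X := by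
  simp only [baseFamily, mem_union, mem_image, mem_range, mem_product, mem_univ, and_true,
    Prod.exists, ← Nat.le_div_iff_mul_le width_pos, Nat.lt_iff_add_one_le]

theorem seg_mem_baseFamily {c : ℕ} (hc : c < n) : seg n (c * width P) ∈ baseFamily P n :=
  mem_baseFamily.2 (.inl ⟨c, hc, rfl⟩)

theorem windowSet_mem_baseFamily {a : ℕ} (ha : (a + 1) * width P ≤ n) (i : Bool) (p : P) :
    windowSet P n a i p ∈ baseFamily P n :=
  mem_baseFamily.2 (.inr ⟨a, i, p, ha, rfl⟩)

theorem baseFamily_subset_windowFamily : baseFamily P n ⊆ windowFamily P n := by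
  intro X hX
  rcases mem_baseFamily.1 hX with ⟨c, hc, rfl⟩ | ⟨a, i, p, ha, rfl⟩
  · exact mem_windowFamily.2 ⟨c, hc, subset_rfl, seg_subset_seg (by gcongr; omega)⟩
  · have := Nat.le_mul_of_pos_right (a + 1) (width_pos (P := P))
    exact mem_windowFamily.2
      ⟨a, by omega, seg_subset_windowSet a i p, windowSet_subset_seg a i p⟩

theorem seg_comparable_windowSet (c a : ℕ) (i : Bool) (p : P) :
    seg n (c * width P) ⊆ windowSet P n a i p ∨ windowSet P n a i p ⊆ seg n (c * width P) := by
  rcases le_or_gt c a with h | h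
  · exact .inl ((seg_subset_seg (by gcongr)).trans (seg_subset_windowSet a i p))
  · exact .inr ((windowSet_subset_seg a i p).trans (seg_subset_seg (by gcongr; omega)))

theorem windowSet_comparable_of_ne {a a' : ℕ} (h : a ≠ a') (i i' : Bool) (p p' : P) :
    windowSet P n a i p ⊆ windowSet P n a' i' p' ∨
      windowSet P n a' i' p' ⊆ windowSet P n a i p := by
  rcases h.lt_or_gt with h | h
  · exact .inl <| (windowSet_subset_seg a i p).trans <|
      (seg_subset_seg (by gcongr; omega)).trans (seg_subset_windowSet a' i' p')
  · exact .inr <| (windowSet_subset_seg a' i' p').trans <|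
      (seg_subset_seg (by gcongr; omega)).trans (seg_subset_windowSet a i p)

theorem seg_comparable_of_mem_baseFamily {X : Finset (Fin n)} (hX : X ∈ baseFamily P n)
    (c : ℕ) : seg n (c * width P) ⊆ X ∨ X ⊆ seg n (c * width P) := by
  rcases mem_baseFamily.1 hX with ⟨c', -, rfl⟩ | ⟨a, i, p, -, rfl⟩
  · rcases le_total c c' with h | h
    · exact .inl (seg_subset_seg (by gcongr))
    · exact .inr (seg_subset_seg (by gcongr))
  · exact seg_comparable_windowSet c a i p

theorem exists_windowSet_of_incompRel {X Y : Finset (Fin n)} (hX : X ∈ baseFamily P n)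
    (hY : Y ∈ baseFamily P n) (h : IncompRel (· ≤ ·) X Y) :
    ∃ a i p, (a + 1) * width P ≤ n ∧ windowSet P n a i p = X := by
  rcases mem_baseFamily.1 hX with ⟨c, -, rfl⟩ | hX
  · exact ((seg_comparable_of_mem_baseFamily hY c).elim h.1 h.2).elim
  · exact hX

theorem exists_windowSet_of_incompRel_windowSet {X : Finset (Fin n)} (hX : X ∈ baseFamily P n)
    {a : ℕ} {i : Bool} {p : P} (h : IncompRel (· ≤ ·) X (windowSet P n a i p)) :
    ∃ i' p', windowSet P n a i' p' = X := by
  rcases mem_baseFamily.1 hX with ⟨c, -, rfl⟩ | ⟨a', i', p', -, rfl⟩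
  · exact ((seg_comparable_windowSet c a i p).elim h.1 h.2).elim
  · obtain rfl | hne := eq_or_ne a' a
    · exact ⟨i', p', rfl⟩
    · exact ((windowSet_comparable_of_ne hne i' i p' p).elim h.1 h.2).elim

/-- In a copy of `P*` the new point is incomparable to the copy of `P` and its top, which
forces all of these into one window and then into one block; but a block holds only `|P|`
sets. -/
theorem not_containsCopy_baseFamily : ¬ ContainsCopy (Augmented P) (baseFamily P n) := by
  rw [containsCopy_iff]
  rintro ⟨φ, hφ⟩
  let x : Augmented P := ↑(Sum.inr () : WithTop P ⊕ Unit)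
  let ofTop (v : WithTop P) : Augmented P := ↑(Sum.inl v : WithTop P ⊕ Unit)
  have hincomp (v : WithTop P) : IncompRel (· ≤ ·) (φ (ofTop v)) (φ x) := by
    simp [IncompRel, x, ofTop]
  obtain ⟨a, i, p, ha, hx⟩ := exists_windowSet_of_incompRel (hφ x) (hφ _) (hincomp ⊤).symm
  choose block elem hv using fun v =>
    exists_windowSet_of_incompRel_windowSet (hφ (ofTop v)) (hx ▸ hincomp v)
  have hblock (v : WithTop P) : block v = block ⊤ := by
    refine ((windowSet_subset_windowSet_iff (p := elem v) (p' := elem ⊤) ha).1 ?_).1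
    rw [hv, hv]
    exact φ.monotone (by simp [ofTop])
  have helem : Function.Injective elem := by
    intro v w h
    have : φ (ofTop v) = φ (ofTop w) := by rw [← hv v, ← hv w, hblock v, hblock w, h]
    simpa [ofTop] using φ.injective this
  simpa [Fintype.card_withTop] using Fintype.card_le_of_injective elem helem

/-- The two boundary segments of window `u`, a block of that window avoiding `j`, and `S` form a
copy of `P*`; the point `j` and the point `j'` beyond the window witness the incomparabilities. -/
theorem containsCopy_insert_baseFamily {S : Finset (Fin n)} {u : ℕ} {j j' : Fin n}
    (hSu : seg n (u * width P) ⊆ S) (hjS : j ∉ S) (hju : u * width P ≤ j)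
    (hju' : j < (u + 1) * width P) (hj'S : j' ∈ S) (hj'u : (u + 1) * width P ≤ j') :
    ContainsCopy (Augmented P) (insert S (baseFamily P n)) := by
  have hfull : (u + 1) * width P ≤ n := hj'u.trans j'.isLt.le
  obtain ⟨i, hi⟩ := exists_block_forall_slot_ne (P := P) u j
  let w := windowEmbedding hfull i
  have hjw (p : P) : j ∈ w p := mem_windowSet.2 ⟨hju', fun r _ => (hi r).symm⟩
  have hj'w (p : P) : j' ∉ w p := fun h => (mem_windowSet.1 h).1.not_ge hj'u
  have hslot (p : P) : ∃ k : Fin n, k ∉ w p ∧ (k : ℕ) < (u + 1) * width P :=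
    ⟨⟨slot P u (i, p), (slot_lt u _).trans_le hfull⟩,
      fun h => (mem_windowSet.1 h).2 p le_rfl rfl, slot_lt u _⟩
  have hA (x : Fin n) : x ∉ seg n (u * width P) ↔ u * width P ≤ x := by simp
  have hB (x : Fin n) : x ∈ seg n ((u + 1) * width P) ↔ (x : ℕ) < (u + 1) * width P := mem_seg
  have hu : u + 1 < n := by
    have := Nat.le_mul_of_pos_right (u + 1) (width_pos (P := P))
    omega
  refine containsCopy_of_ssubset_of_incompRel (A := seg n (u * width P))
    (B := seg n ((u + 1) * width P)) w
    (mem_insert_of_mem (seg_mem_baseFamily (by omega)))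
    (mem_insert_of_mem (seg_mem_baseFamily hu)) (mem_insert_self _ _)
    (fun p => mem_insert_of_mem (windowSet_mem_baseFamily hfull i p)) ?_ ?_ ?_ ?_ ?_ ?_
  · exact ssubset_of_subset_not_subset (seg_subset_seg (by gcongr; omega))
      (fun h => (hA j).2 hju (h ((hB j).2 hju')))
  · exact ssubset_of_subset_not_subset hSu (fun h => (hA j').2 (by omega) (h hj'S))
  · exact fun p => ssubset_of_subset_not_subset (seg_subset_windowSet u i p)
      (fun h => (hA j).2 hju (h (hjw p)))
  · intro p
    obtain ⟨k, hkw, hk⟩ := hslot p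
    exact ssubset_of_subset_not_subset (windowSet_subset_seg u i p)
      (fun h => hkw (h ((hB k).2 hk)))
  · exact ⟨fun h => hjS (h ((hB j).2 hju')), fun h => (hB j').1 (h hj'S) |>.not_ge hj'u⟩
  · exact fun p => ⟨fun h => hjS (h (hjw p)), fun h => hj'w p (h hj'S)⟩

/-- Let `j` be the least point missing from `S` and `u` its window; as `S` is not confined to
window `u`, it contains a point beyond it. -/
theorem containsCopy_insert_of_notMem_windowFamily (hn : 0 < n) {S : Finset (Fin n)}
    (hS : S ∉ windowFamily P n) : ContainsCopy (Augmented P) (insert S (baseFamily P n)) := by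
  have hSc : Sᶜ.Nonempty := by
    rw [nonempty_iff_ne_empty, Ne, compl_eq_empty_iff]
    rintro rfl
    exact hS (univ_mem_windowFamily hn)
  obtain ⟨j, hjS, hjmin⟩ := Sᶜ.exists_min_image Fin.val hSc
  rw [mem_compl] at hjS
  set u := (j : ℕ) / width P
  have hju : u * width P ≤ j := Nat.div_mul_le_self _ _
  have hju' : j < (u + 1) * width P :=
    mul_comm (width P) (u + 1) ▸ Nat.lt_mul_div_succ _ width_pos
  have hSu : seg n (u * width P) ⊆ S := fun x hx => by
    by_contra hxS
    exact (mem_seg.1 hx).not_ge ((hjmin x (mem_compl.2 hxS)).trans' hju)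
  have hSu' : ¬ S ⊆ seg n ((u + 1) * width P) := fun h =>
    hS (mem_windowFamily.2 ⟨u, (Nat.div_le_self _ _).trans_lt j.isLt, hSu, h⟩)
  obtain ⟨j', hj'S, hj'u⟩ := not_subset.1 hSu'
  exact containsCopy_insert_baseFamily hSu hjS hju hju' hj'S (by simpa using hj'u)

end Augmented

/-- For any finite poset `P` there is a finite poset `Q` with at most
`|P| + 3` elements, containing `P` as an induced subposet, and with `sat*(n, Q) = O(n)`. -/
theorem statement9 (P : Type) [PartialOrder P] [Fintype P] :
    ∃ (Q : Type) (instQ : PartialOrder Q) (_ : Fintype Q),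
      Nat.card Q ≤ Nat.card P + 3 ∧
      (∃ g : P → Q, Function.Injective g ∧
        ∀ a b : P, a ≤ b ↔ @LE.le Q (@Preorder.toLE Q (@PartialOrder.toPreorder Q instQ)) (g a) (g b)) ∧
      (∃ C N : ℕ, ∀ n ≥ N, @satStar Q instQ n ≤ C * n) := by
  refine ⟨Augmented P, inferInstance, inferInstance, Augmented.card_eq.le,
    ⟨Augmented.embedding, Augmented.embedding.injective, fun a b =>
      Augmented.embedding.le_iff_le.symm⟩, 2 ^ Augmented.width P, 1, fun n hn => ?_⟩
  calc satStar (Augmented P) n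
      ≤ #(Augmented.windowFamily P n) :=
        satStar_le_card_s9 Augmented.baseFamily_subset_windowFamily
          Augmented.not_containsCopy_baseFamily
          fun _ => Augmented.containsCopy_insert_of_notMem_windowFamily hn
    _ ≤ n * 2 ^ Augmented.width P := Augmented.card_windowFamily_le
    _ = 2 ^ Augmented.width P * n := mul_comm _ _
end

section
/- Let P be a finite poset with p elements that has neither a greatest element nor a least element, and let n ≥ 3p − 1. Then the percolation number satisfies sat_p(n, P) = p + 1. -/
open Finset Filter

/-- `𝒜` is a percolating family for `α`: the subsets of `[n]` outside `𝒜` can be ordered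
as `A₁, …, A_N` so that, for each `i`, adding `A₁, …, Aᵢ` to `𝒜` creates an induced copy
of `α` containing `Aᵢ`. -/
def IsPercolating (α : Type*) [PartialOrder α] {n : ℕ}
    (𝒜 : Finset (Finset (Fin n))) : Prop :=
  ∃ l : List (Finset (Fin n)), l.Nodup ∧ (∀ S : Finset (Fin n), S ∈ l ↔ S ∉ 𝒜) ∧
    ∀ i : Fin l.length, ∃ f : α → Finset (Fin n),
      IsInducedCopy (𝒜 ∪ (l.take (i + 1)).toFinset) f ∧ ∃ a : α, f a = l.get i

/-- The percolation number `sat_p(n, α)`: the minimum size of an `α`-percolating family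
of subsets of `[n]`. -/
noncomputable def satP (α : Type*) [PartialOrder α] (n : ℕ) : ℕ :=
  sInf {k : ℕ | ∃ 𝒜 : Finset (Finset (Fin n)), IsPercolating α 𝒜 ∧ 𝒜.card = k}

/-!
Every induced copy of `P` avoids `∅` and `[n]`, since `P` has no least or greatest element, so
both lie in any percolating family; the first set added completes a copy whose other `p - 1`
members are already in the family, which gives `p + 1` sets.

Conversely, embed `P` into `[n]` by `e` and let `Z` be the complement of its image, so that
`|Z| ≥ 2p - 1`. The family of `∅`, `[n]` and the images `e(↓w)` of all principal down-sets but one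
percolates. Each new set `S` is produced by a copy of `P` sending a minimal or maximal element `x`
to `S` and every other element to a set produced earlier. This yields in turn the sets
`e(↓w) ∪ E` with `E ⊆ Z`, the proper subsets of `Z`, every set not containing `Z` (adding the
points of the image of `e` one at a time: the set `T` being extended has `|T ∩ Z| ≥ p` or
`|Z \ T| ≥ p`, which is where `n ≥ 3p - 1` enters, and this leaves room for an injection of `P`),
and finally the sets containing `Z`.
-/

-- The sets produced from `𝒜` by the percolation process, in any order.
inductive Reachable (α : Type*) [PartialOrder α] {n : ℕ} (𝒜 : Finset (Finset (Fin n))) :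
    Finset (Fin n) → Prop
  | mem {S : Finset (Fin n)} : S ∈ 𝒜 → Reachable α 𝒜 S
  | step (f : α ↪o Finset (Fin n)) (a : α) :
      (∀ b, b ≠ a → Reachable α 𝒜 (f b)) → Reachable α 𝒜 (f a)

section Percolation

variable {α : Type*} [PartialOrder α] {n : ℕ} {𝒜 ℬ : Finset (Finset (Fin n))}
  {S T : Finset (Fin n)}

theorem Reachable.mono (h𝒜ℬ : 𝒜 ⊆ ℬ) (hS : Reachable α 𝒜 S) : Reachable α ℬ S := by
  induction hS with
  | mem hS => exact .mem (h𝒜ℬ hS)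
  | step f a _ ih => exact .step f a ih

theorem Reachable.exists_isInducedCopy_insert (hS : Reachable α 𝒜 S) (hS𝒜 : S ∉ 𝒜) :
    ∃ T ∉ 𝒜, ∃ f : α → Finset (Fin n), IsInducedCopy (insert T 𝒜) f ∧ ∃ a, f a = T := by
  induction hS with
  | mem hS => exact absurd hS hS𝒜
  | step f a _ ih =>
    by_cases hall : ∀ b, b ≠ a → f b ∈ 𝒜
    · refine ⟨f a, hS𝒜, f, ⟨f.injective, fun b => ?_, fun u v => f.le_iff_le.symm⟩, a, rfl⟩
      by_cases hb : b = a
      · rw [hb]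
        exact mem_insert_self _ _
      · exact mem_insert_of_mem (hall b hb)
    · obtain ⟨b, hb, hb𝒜⟩ := not_forall₂.1 hall
      exact ih b hb hb𝒜

theorem IsPercolating.of_insert (hT : T ∉ 𝒜)
    (hcopy : ∃ f : α → Finset (Fin n), IsInducedCopy (insert T 𝒜) f ∧ ∃ a, f a = T)
    (h : IsPercolating α (insert T 𝒜)) : IsPercolating α 𝒜 := by
  obtain ⟨l, hnodup, hmem, hstep⟩ := h
  refine ⟨T :: l, List.nodup_cons.2 ⟨fun hTl => (hmem T).1 hTl (mem_insert_self _ _), hnodup⟩,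
    fun S => ?_, ?_⟩
  · by_cases hST : S = T <;> simp [hST, hT, hmem]
  · rintro ⟨_ | j, hj⟩
    · simpa [← insert_eq] using hcopy
    · obtain ⟨f, hf, a, ha⟩ := hstep ⟨j, by simpa using hj⟩
      refine ⟨f, ?_, a, ha⟩
      simpa [List.take_succ_cons, List.toFinset_cons, union_insert, ← insert_union] using hf

theorem isPercolating_of_forall_reachable (h : ∀ S, Reachable α 𝒜 S) : IsPercolating α 𝒜 := by
  induction hk : #𝒜ᶜ generalizing 𝒜 with
  | zero =>
    refine ⟨[], List.nodup_nil, fun S => ?_, fun i => i.elim0⟩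
    simp [(compl_eq_empty_iff _).1 (card_eq_zero.1 hk)]
  | succ k ih =>
    obtain ⟨S, hS⟩ := card_pos.1 (by omega : 0 < #𝒜ᶜ)
    obtain ⟨T, hT, hcopy⟩ := (h S).exists_isInducedCopy_insert (mem_compl.1 hS)
    refine IsPercolating.of_insert hT hcopy (ih (fun S => (h S).mono (subset_insert _ _)) ?_)
    rw [compl_insert, card_erase_of_mem (mem_compl.2 hT), hk, Nat.add_sub_cancel]

end Percolation

section LowerBound

variable {P : Type*} [PartialOrder P] {n : ℕ} {𝒜 𝒢 : Finset (Finset (Fin n))}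
  {f : P → Finset (Fin n)}

theorem IsInducedCopy.ne_empty (hbot : ¬ ∃ m : P, IsBot m) (hf : IsInducedCopy 𝒢 f) (a : P) :
    f a ≠ ∅ :=
  fun ha => hbot ⟨a, fun b => (hf.2.2 a b).2 (ha ▸ empty_subset _)⟩

theorem IsInducedCopy.ne_univ (htop : ¬ ∃ m : P, IsTop m) (hf : IsInducedCopy 𝒢 f) (a : P) :
    f a ≠ univ :=
  fun ha => htop ⟨a, fun b => (hf.2.2 b a).2 (ha ▸ subset_univ _)⟩

theorem IsPercolating.mem_of_forall_ne {S : Finset (Fin n)} (h : IsPercolating P 𝒜)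
    (hS : ∀ (𝒢 : Finset (Finset (Fin n))) (f : P → Finset (Fin n)), IsInducedCopy 𝒢 f →
      ∀ a, f a ≠ S) : S ∈ 𝒜 := by
  obtain ⟨l, -, hmem, hstep⟩ := h
  by_contra hS𝒜
  obtain ⟨i, hi⟩ := List.mem_iff_get.1 ((hmem S).2 hS𝒜)
  obtain ⟨f, hf, a, ha⟩ := hstep i
  exact hS _ f hf a (ha.trans hi)

theorem IsPercolating.exists_isInducedCopy_insert (h : IsPercolating P 𝒜) (h𝒜 : 𝒜 ≠ univ) :
    ∃ T, ∃ f : P → Finset (Fin n), IsInducedCopy (insert T 𝒜) f ∧ ∃ a, f a = T := by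
  obtain ⟨l, -, hmem, hstep⟩ := h
  obtain ⟨S, hS⟩ : ∃ S, S ∉ 𝒜 := by simpa [eq_univ_iff_forall] using h𝒜
  have hl : 0 < l.length := List.length_pos_of_mem ((hmem S).2 hS)
  obtain ⟨f, hf, a, ha⟩ := hstep ⟨0, hl⟩
  refine ⟨l.get ⟨0, hl⟩, f, ?_, a, ha⟩
  obtain ⟨T, l, rfl⟩ := List.exists_cons_of_length_pos hl
  simpa [← insert_eq] using hf

theorem IsPercolating.card_lt_card [Fintype P] [Nonempty P] (htop : ¬ ∃ m : P, IsTop m)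
    (hbot : ¬ ∃ m : P, IsBot m) (hpn : Fintype.card P ≤ n) (h : IsPercolating P 𝒜) :
    Fintype.card P < #𝒜 := by
  by_cases h𝒜 : 𝒜 = univ
  · calc Fintype.card P + 1 ≤ 2 ^ n := (Nat.lt_two_pow_self).trans_le' (by omega)
      _ = #𝒜 := by simp [h𝒜]
  obtain ⟨T, f, hf, a, rfl⟩ := h.exists_isInducedCopy_insert h𝒜
  have hempty : ∅ ∈ 𝒜 := h.mem_of_forall_ne fun _ _ hg b => hg.ne_empty hbot b
  have huniv : univ ∈ 𝒜 := h.mem_of_forall_ne fun _ _ hg b => hg.ne_univ htop b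
  set ℱ := (univ.image f).erase (f a)
  have hℱ : ℱ ⊆ 𝒜 := by
    intro S hS
    obtain ⟨hSa, b, -, rfl⟩ := by simpa [ℱ] using hS
    exact (mem_insert.1 (hf.2.1 b)).resolve_left hSa
  have hcardℱ : #ℱ + 1 = Fintype.card P := by
    rw [card_erase_add_one (mem_image_of_mem f (mem_univ a)),
      card_image_of_injective _ hf.1, card_univ]
  have huniv_notMem : univ ∉ ℱ := by simpa [ℱ] using fun _ b => hf.ne_univ htop b
  have hempty_notMem : ∅ ∉ insert univ ℱ := by
    have : (univ : Finset (Fin n)).Nonempty := univ_nonempty_iff.2 ⟨⟨0, by omega⟩⟩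
    simpa [ℱ, this.ne_empty.symm] using fun _ b => hf.ne_empty hbot b
  calc Fintype.card P + 1 = #(insert ∅ (insert univ ℱ)) := by
        rw [card_insert_of_notMem hempty_notMem, card_insert_of_notMem huniv_notMem, hcardℱ]
    _ ≤ #𝒜 := card_le_card (insert_subset hempty (insert_subset huniv hℱ))

end LowerBound

theorem Finite.exists_isMin (P : Type*) [PartialOrder P] [Finite P] [Nonempty P] :
    ∃ x : P, IsMin x := by
  obtain ⟨x, hx⟩ :=
    exists_minimal_of_wellFoundedLT (fun _ : P => True) ⟨Classical.arbitrary P, trivial⟩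
  exact ⟨x, minimal_true.1 hx⟩

theorem Finite.exists_isMax (P : Type*) [PartialOrder P] [Finite P] [Nonempty P] :
    ∃ x : P, IsMax x := by
  obtain ⟨x, hx⟩ :=
    exists_maximal_of_wellFoundedGT (fun _ : P => True) ⟨Classical.arbitrary P, trivial⟩
  exact ⟨x, maximal_true.1 hx⟩

section Gadgets

variable {P β : Type*} [PartialOrder P] [DecidableEq β]

open Classical in
noncomputable def minGadget (x : P) (S : Finset β) (s₀ : β) (h : P → Finset β) (w : P) :
    Finset β :=
  if w = x then S else h w ∪ if x ≤ w then S else S.erase s₀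

open Classical in
noncomputable def maxGadget (x : P) (S : Finset β) (t₀ : β) (h : P → Finset β) (w : P) :
    Finset β :=
  if w = x then S else (if w ≤ x then S else insert t₀ S) \ h w

variable {x : P} {S : Finset β} {s₀ t₀ : β} {h : P → Finset β}

theorem minGadget_subset_iff (hx : IsMin x) (hs₀ : s₀ ∈ S) (hdisj : ∀ w, Disjoint (h w) S)
    (hne : ∀ w, w ≠ x → (h w).Nonempty) (hh : ∀ u v, u ≠ x → v ≠ x → (h u ⊆ h v ↔ u ≤ v))
    (u v : P) : minGadget x S s₀ h u ⊆ minGadget x S s₀ h v ↔ u ≤ v := by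
  unfold minGadget
  by_cases hu : u = x <;> by_cases hv : v = x
  · simp [hu, hv]
  · subst hu
    by_cases hxv : u ≤ v
    · simp [hv, hxv]
    · simp only [hv, hxv, if_true, if_false, iff_false]
      intro hsub
      rcases mem_union.1 (hsub hs₀) with hs₀v | hs₀v
      · exact disjoint_left.1 (hdisj v) hs₀v hs₀
      · exact notMem_erase s₀ S hs₀v
  · subst hv
    simp only [hu, if_true, if_false]
    refine iff_of_false (fun hsub => ?_) fun hux => hu (hx.eq_of_ge hux).symm
    obtain ⟨c, hc⟩ := hne u hu
    exact disjoint_left.1 (hdisj u) hc (hsub (mem_union_left _ hc))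
  · simp only [hu, hv, if_false]
    constructor
    · intro hsub
      refine (hh u v hu hv).1 (Disjoint.left_le_of_le_sup_right (subset_union_left.trans hsub) ?_)
      split_ifs
      · exact hdisj u
      · exact (hdisj u).mono_right (erase_subset _ _)
    · intro huv
      refine union_subset_union ((hh u v hu hv).2 huv) ?_
      split_ifs with hxu hxv hxv
      · exact Subset.rfl
      · exact absurd (hxu.trans huv) hxv
      · exact erase_subset _ _
      · exact Subset.rfl

theorem maxGadget_eq_compl_minGadget [Fintype β] (w : P) :
    maxGadget x S t₀ h w =
      (minGadget (OrderDual.toDual x) Sᶜ t₀ (fun w => h (OrderDual.ofDual w))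
        (OrderDual.toDual w))ᶜ := by
  unfold maxGadget minGadget
  split_ifs <;> simp_all [compl_union, compl_erase, sdiff_eq_inter_compl, inter_comm]

theorem maxGadget_subset_iff [Fintype β] (hx : IsMax x) (ht₀ : t₀ ∉ S) (hsub : ∀ w, h w ⊆ S)
    (hne : ∀ w, w ≠ x → (h w).Nonempty) (hh : ∀ u v, u ≠ x → v ≠ x → (h u ⊆ h v ↔ v ≤ u))
    (u v : P) : maxGadget x S t₀ h u ⊆ maxGadget x S t₀ h v ↔ u ≤ v := by
  rw [maxGadget_eq_compl_minGadget, maxGadget_eq_compl_minGadget, compl_subset_compl,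
    minGadget_subset_iff (h := fun w => h (OrderDual.ofDual w)) (isMin_toDual_iff.2 hx)
      (mem_compl.2 ht₀) (fun w => subset_compl_iff_disjoint_right.1 (by simpa using hsub _)) hne hh]
  rfl

end Gadgets

section GadgetReachability

variable {P : Type*} [PartialOrder P] {n : ℕ} {𝒜 : Finset (Finset (Fin n))} {x : P}
  {S : Finset (Fin n)} {s₀ t₀ : Fin n} {h : P → Finset (Fin n)}

theorem reachable_of_minGadget (hx : IsMin x) (hs₀ : s₀ ∈ S) (hdisj : ∀ w, Disjoint (h w) S)
    (hne : ∀ w, w ≠ x → (h w).Nonempty) (hh : ∀ u v, u ≠ x → v ≠ x → (h u ⊆ h v ↔ u ≤ v))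
    (hle : ∀ b, b ≠ x → x ≤ b → Reachable P 𝒜 (h b ∪ S))
    (hnle : ∀ b, ¬ x ≤ b → Reachable P 𝒜 (h b ∪ S.erase s₀)) : Reachable P 𝒜 S := by
  have := Reachable.step
    (OrderEmbedding.ofMapLEIff _ (minGadget_subset_iff hx hs₀ hdisj hne hh)) x fun b hb => by
      by_cases hxb : x ≤ b
      · simpa [minGadget, hb, hxb] using hle b hb hxb
      · simpa [minGadget, hb, hxb] using hnle b hxb
  simpa [minGadget] using this

theorem reachable_of_maxGadget (hx : IsMax x) (ht₀ : t₀ ∉ S) (hsub : ∀ w, h w ⊆ S)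
    (hne : ∀ w, w ≠ x → (h w).Nonempty) (hh : ∀ u v, u ≠ x → v ≠ x → (h u ⊆ h v ↔ v ≤ u))
    (hle : ∀ b, b ≠ x → b ≤ x → Reachable P 𝒜 (S \ h b))
    (hnle : ∀ b, ¬ b ≤ x → Reachable P 𝒜 (insert t₀ S \ h b)) : Reachable P 𝒜 S := by
  have := Reachable.step
    (OrderEmbedding.ofMapLEIff _ (maxGadget_subset_iff hx ht₀ hsub hne hh)) x fun b hb => by
      by_cases hbx : b ≤ x
      · simpa [maxGadget, hb, hbx] using hle b hb hbx
      · simpa [maxGadget, hb, hbx] using hnle b hbx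
  simpa [maxGadget] using this

end GadgetReachability

section DownImage

variable {P β : Type*} [PartialOrder P] [Fintype P] (κ : P ↪ β)

open Classical in
noncomputable def downImage (w : P) : Finset β := (univ.filter (· ≤ w)).map κ

variable {κ} {x u v w : P}

theorem mem_downImage {a : P} : κ a ∈ downImage κ w ↔ a ≤ w := by
  simp [downImage]

theorem downImage_subset_iff : downImage κ u ⊆ downImage κ v ↔ u ≤ v :=
  ⟨fun h => mem_downImage.1 (h (mem_downImage.2 le_rfl)), fun huv c hc => by
    obtain ⟨a, -, rfl⟩ := mem_map.1 hc
    exact mem_downImage.2 ((mem_downImage.1 hc).trans huv)⟩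

theorem mem_map_univ_sdiff_downImage_of_isMax [DecidableEq β] (hx : IsMax x) (hw : w ≠ x) :
    κ x ∈ univ.map κ \ downImage κ w :=
  mem_sdiff.2 ⟨mem_map_of_mem κ (mem_univ x),
    mt mem_downImage.1 fun hxw => hw (hx.eq_of_le hxw).symm⟩

theorem map_univ_sdiff_downImage_subset_iff [DecidableEq β] :
    univ.map κ \ downImage κ u ⊆ univ.map κ \ downImage κ v ↔ v ≤ u := by
  refine ⟨fun h => ?_, fun hvu c hc => ?_⟩
  · by_contra hvu
    have := h (mem_sdiff.2 ⟨mem_map_of_mem κ (mem_univ v), mt mem_downImage.1 hvu⟩)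
    exact (mem_sdiff.1 this).2 (mem_downImage.2 le_rfl)
  · obtain ⟨hcκ, hcu⟩ := mem_sdiff.1 hc
    obtain ⟨a, -, rfl⟩ := mem_map.1 hcκ
    exact mem_sdiff.2 ⟨hcκ, fun hav => hcu (mem_downImage.2 ((mem_downImage.1 hav).trans hvu))⟩

theorem erase_downImage_subset_iff [DecidableEq β] (hu : u ≠ x) :
    (downImage κ u).erase (κ x) ⊆ (downImage κ v).erase (κ x) ↔ u ≤ v := by
  refine ⟨fun h => ?_, fun huv => erase_subset_erase _ (downImage_subset_iff.2 huv)⟩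
  have := h (mem_erase.2 ⟨κ.injective.ne hu, mem_downImage.2 le_rfl⟩)
  exact mem_downImage.1 (mem_of_mem_erase this)

end DownImage

section Construction

variable {P : Type*} [PartialOrder P] [Fintype P] {n : ℕ}

open Classical in
noncomputable def baseFamily (e : P ↪ Fin n) (x₀ : P) : Finset (Finset (Fin n)) :=
  insert ∅ (insert univ ((univ.erase x₀).image (downImage e)))

variable {e : P ↪ Fin n} {x₀ : P} {Z : Finset (Fin n)}

theorem disjoint_downImage (hZ : ∀ a, e a ∉ Z) (w : P) : Disjoint (downImage e w) Z :=
  disjoint_left.2 fun c hc hcZ => by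
    obtain ⟨a, -, rfl⟩ := mem_map.1 hc
    exact hZ a hcZ

open Classical in
theorem card_baseFamily (hZ : ∀ a, e a ∉ Z) (hZne : Z.Nonempty) :
    #(baseFamily e x₀) = Fintype.card P + 1 := by
  obtain ⟨z, hz⟩ := hZne
  have hinj : Function.Injective (downImage e) := fun u v huv =>
    le_antisymm (downImage_subset_iff.1 huv.subset) (downImage_subset_iff.1 huv.symm.subset)
  have huniv : univ ∉ (univ.erase x₀).image (downImage e) := by
    simp only [mem_image, not_exists, not_and]
    intro w _ hw
    exact disjoint_left.1 (disjoint_downImage hZ w) (hw ▸ mem_univ z) hz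
  have hempty : ∅ ∉ insert univ ((univ.erase x₀).image (downImage e)) := by
    simp only [mem_insert, mem_image, not_or, not_exists, not_and]
    exact ⟨(univ_nonempty_iff.2 ⟨z⟩).ne_empty.symm,
      fun w _ hw => ne_empty_of_mem (mem_downImage.2 le_rfl) hw⟩
  rw [baseFamily, card_insert_of_notMem hempty, card_insert_of_notMem huniv,
    card_image_of_injective _ hinj, card_erase_of_mem (mem_univ _), card_univ]
  have := Fintype.card_pos_iff.2 ⟨x₀⟩
  omega

open Classical in
theorem downImage_mem_baseFamily {w : P} (hw : w ≠ x₀) : downImage e w ∈ baseFamily e x₀ :=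
  mem_insert_of_mem (mem_insert_of_mem (mem_image_of_mem _ (mem_erase.2 ⟨hw, mem_univ w⟩)))

theorem reachable_downImage (w : P) : Reachable P (baseFamily e x₀) (downImage e w) := by
  by_cases hw : w = x₀
  · subst hw
    exact .step (OrderEmbedding.ofMapLEIff (downImage e) fun _ _ => downImage_subset_iff) w
      fun b hb => .mem (downImage_mem_baseFamily hb)
  · exact .mem (downImage_mem_baseFamily hw)

open Classical in
theorem reachable_downImage_union (hZ : ∀ a, e a ∉ Z) (w : P) {E : Finset (Fin n)}
    (hE : E ⊆ Z) : Reachable P (baseFamily e x₀) (downImage e w ∪ E) := by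
  induction w using WellFoundedGT.induction with
  | _ w ih =>
  let g : P → Finset (Fin n) := fun u => downImage e u ∪ if w ≤ u then E else ∅
  have hg : ∀ u v, g u ⊆ g v ↔ u ≤ v := by
    refine fun u v => ⟨fun h => (downImage_subset_iff (κ := e)).1 ?_, fun huv => ?_⟩
    · refine Disjoint.left_le_of_le_sup_right (subset_union_left.trans h) ?_
      split_ifs
      · exact (disjoint_downImage hZ u).mono_right hE
      · exact disjoint_empty_right _
    · refine union_subset_union (downImage_subset_iff.2 huv) ?_
      split_ifs with hwu hwv
      · exact Subset.rfl
      · exact absurd (hwu.trans huv) hwv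
      · exact empty_subset _
      · exact Subset.rfl
  have := Reachable.step (OrderEmbedding.ofMapLEIff g hg) w fun b hb => by
    by_cases hwb : w ≤ b
    · simpa [g, hwb] using ih b (lt_of_le_of_ne hwb (Ne.symm hb))
    · simpa [g, hwb] using reachable_downImage b
  simpa [g] using this

end Construction

section Induction

variable {P : Type*} [PartialOrder P] [Fintype P] [Nonempty P] {n : ℕ}
  {𝒜 : Finset (Finset (Fin n))} {Z C T : Finset (Fin n)} {ν : Fin n}

theorem reachable_insert_of_card_le_card_inter (hZC : Z ⊆ C) (hν : ν ∉ C) (hTC : T ⊆ C)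
    (hZT : ¬ Z ⊆ T) (hcard : Fintype.card P ≤ #(T ∩ Z))
    (hC : ∀ X ⊆ C, ¬ Z ⊆ X → Reachable P 𝒜 X) : Reachable P 𝒜 (insert ν T) := by
  obtain ⟨t₀, ht₀Z, ht₀T⟩ := not_subset.1 hZT
  obtain ⟨κ, hκ⟩ := Function.Embedding.exists_of_card_le_finset hcard
  have hκT : ∀ a, κ a ∈ T := fun a => (mem_inter.1 (hκ ⟨a, rfl⟩)).1
  have hκZ : ∀ a, κ a ∈ Z := fun a => (mem_inter.1 (hκ ⟨a, rfl⟩)).2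
  have hνκ : ν ∉ univ.map κ := fun hνκ => by
    obtain ⟨a, -, rfl⟩ := mem_map.1 hνκ
    exact hν (hZC (hκZ a))
  obtain ⟨x, hx⟩ := Finite.exists_isMax P
  have hpart : ∀ b, b ≠ x → ∀ X ⊆ insert t₀ (insert ν T),
      Reachable P 𝒜 (X \ insert ν (univ.map κ \ downImage κ b)) := by
    intro b hb X hX
    refine hC _ (fun c hc => ?_) fun hZX => ?_
    · obtain ⟨hcX, hcν⟩ := mem_sdiff.1 hc
      rcases mem_insert.1 (hX hcX) with rfl | hc
      · exact hZC ht₀Z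
      · exact hTC ((mem_insert.1 hc).resolve_left
          fun hcν' => hcν (hcν' ▸ mem_insert_self _ _))
    · exact (mem_sdiff.1 (hZX (hκZ x))).2
        (mem_insert_of_mem (mem_map_univ_sdiff_downImage_of_isMax hx hb))
  refine reachable_of_maxGadget hx (t₀ := t₀)
    (h := fun w => insert ν (univ.map κ \ downImage κ w)) ?_
    (fun w => insert_subset_insert _ (sdiff_subset.trans ?_)) (fun w _ => insert_nonempty _ _)
    (fun u v _ _ => ?_) (fun b hb _ => hpart b hb _ (subset_insert _ _))
    (fun b hbx => hpart b (fun hbx' => hbx hbx'.le) _ Subset.rfl)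
  · simp only [mem_insert, not_or]
    exact ⟨fun ht₀ν => hν (ht₀ν ▸ hZC ht₀Z), ht₀T⟩
  · intro c hc
    obtain ⟨a, -, rfl⟩ := mem_map.1 hc
    exact hκT a
  · rw [insert_subset_insert_iff (fun h => hνκ (mem_sdiff.1 h).1),
      map_univ_sdiff_downImage_subset_iff]

theorem reachable_insert_of_card_le_card_sdiff (hZC : Z ⊆ C) (hν : ν ∉ C) (hTC : T ⊆ C)
    (hcard : Fintype.card P ≤ #(Z \ T)) (hC : ∀ X ⊆ C, ¬ Z ⊆ X → Reachable P 𝒜 X)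
    (ih : ∀ T' ⊆ C, ¬ Z ⊆ T' → #(C \ T') < #(C \ T) → Reachable P 𝒜 (insert ν T')) :
    Reachable P 𝒜 (insert ν T) := by
  obtain ⟨κ, hκ⟩ := Function.Embedding.exists_of_card_le_finset hcard
  have hκZ : ∀ a, κ a ∈ Z := fun a => (mem_sdiff.1 (hκ ⟨a, rfl⟩)).1
  have hκT : ∀ a, κ a ∉ T := fun a => (mem_sdiff.1 (hκ ⟨a, rfl⟩)).2
  obtain ⟨x, hx⟩ := Finite.exists_isMin P
  have hκh : ∀ w, w ≠ x → κ w ∈ (downImage κ w).erase (κ x) := fun w hw =>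
    mem_erase.2 ⟨κ.injective.ne hw, mem_downImage.2 le_rfl⟩
  have hhZ : ∀ w, (downImage κ w).erase (κ x) ⊆ Z := fun w c hc => by
    obtain ⟨a, -, rfl⟩ := mem_map.1 (mem_of_mem_erase hc)
    exact hκZ a
  have hhC : ∀ w, (downImage κ w).erase (κ x) ∪ T ⊆ C := fun w =>
    union_subset ((hhZ w).trans hZC) hTC
  have hZh : ∀ w, ¬ Z ⊆ (downImage κ w).erase (κ x) ∪ T := fun w hZ => by
    rcases mem_union.1 (hZ (hκZ x)) with hκx | hκx
    · exact notMem_erase _ _ hκx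
    · exact hκT x hκx
  refine reachable_of_minGadget hx (mem_insert_self ν T)
    (h := fun w => (downImage κ w).erase (κ x))
    (fun w => disjoint_left.2 fun c hc hcT => ?_) (fun w hw => ⟨κ w, hκh w hw⟩)
    (fun u v hu _ => erase_downImage_subset_iff hu) (fun b hb _ => ?_) (fun b _ => ?_)
  · rcases mem_insert.1 hcT with rfl | hcT
    · exact hν (hZC (hhZ w hc))
    · obtain ⟨a, -, rfl⟩ := mem_map.1 (mem_of_mem_erase hc)
      exact hκT a hcT
  · rw [union_insert]
    refine ih _ (hhC b) (hZh b) (card_lt_card ?_)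
    rw [ssubset_iff_of_subset (sdiff_subset_sdiff Subset.rfl subset_union_right)]
    exact ⟨κ b, mem_sdiff.2 ⟨hZC (hκZ b), hκT b⟩,
      fun hκb => (mem_sdiff.1 hκb).2 (mem_union_left _ (hκh b hb))⟩
  · rw [erase_insert fun hνT => hν (hTC hνT)]
    exact hC _ (hhC b) (hZh b)

theorem reachable_insert (hZC : Z ⊆ C) (hν : ν ∉ C) (hZcard : 2 * Fintype.card P - 1 ≤ #Z)
    (hC : ∀ X ⊆ C, ¬ Z ⊆ X → Reachable P 𝒜 X) (hTC : T ⊆ C) (hZT : ¬ Z ⊆ T) :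
    Reachable P 𝒜 (insert ν T) := by
  induction hk : #(C \ T) using Nat.strong_induction_on generalizing T with
  | _ k ih =>
  by_cases hbig : Fintype.card P ≤ #(T ∩ Z)
  · exact reachable_insert_of_card_le_card_inter hZC hν hTC hZT hbig hC
  · refine reachable_insert_of_card_le_card_sdiff hZC hν hTC ?_ hC
      fun T' hT'C hZT' hlt => ih _ (hk ▸ hlt) hT'C hZT' rfl
    have := card_sdiff_add_card_inter Z T
    have := Fintype.card_pos (α := P)
    rw [inter_comm] at hbig
    omega

theorem reachable_of_subset_of_ne_univ (hZcard : Fintype.card P ≤ #Z)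
    (hR : ∀ X, ¬ Z ⊆ X → Reachable P 𝒜 X) {S : Finset (Fin n)} (hZS : Z ⊆ S)
    (hS : S ≠ univ) : Reachable P 𝒜 S := by
  obtain ⟨t₀, ht₀⟩ : ∃ t₀, t₀ ∉ S := by simpa [eq_univ_iff_forall] using hS
  obtain ⟨κ, hκ⟩ := Function.Embedding.exists_of_card_le_finset hZcard
  have hκZ : ∀ a, κ a ∈ Z := fun a => hκ ⟨a, rfl⟩
  obtain ⟨x, hx⟩ := Finite.exists_isMax P
  have hpart : ∀ b, b ≠ x → ∀ X, Reachable P 𝒜 (X \ (univ.map κ \ downImage κ b)) :=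
    fun b hb X => hR _ fun hZX =>
      (mem_sdiff.1 (hZX (hκZ x))).2 (mem_map_univ_sdiff_downImage_of_isMax hx hb)
  refine reachable_of_maxGadget hx ht₀ (h := fun w => univ.map κ \ downImage κ w)
    (fun w => sdiff_subset.trans fun c hc => ?_)
    (fun w hw => ⟨κ x, mem_map_univ_sdiff_downImage_of_isMax hx hw⟩)
    (fun u v _ _ => map_univ_sdiff_downImage_subset_iff) (fun b hb _ => hpart b hb _)
    (fun b hbx => hpart b (fun hbx' => hbx hbx'.le) _)
  obtain ⟨a, -, rfl⟩ := mem_map.1 hc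
  exact hZS (hκZ a)

end Induction

section UpperBound

variable {P : Type*} [PartialOrder P] [Fintype P] [Nonempty P] {n : ℕ} {e : P ↪ Fin n}
  {x₀ : P} {Z : Finset (Fin n)}

theorem reachable_of_ssubset (hZ : ∀ a, e a ∉ Z) {S : Finset (Fin n)} (hSZ : S ⊂ Z) :
    Reachable P (baseFamily e x₀) S := by
  obtain rfl | ⟨s₀, hs₀⟩ := S.eq_empty_or_nonempty
  · exact .mem (mem_insert_self _ _)
  obtain ⟨z₀, hz₀Z, hz₀S⟩ := exists_of_ssubset hSZ
  obtain ⟨x, hx⟩ := Finite.exists_isMin P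
  have hz₀ : ∀ w, z₀ ∉ downImage e w := fun w hz₀ =>
    disjoint_left.1 (disjoint_downImage hZ w) hz₀ hz₀Z
  have hpart : ∀ b {E}, E ⊆ S →
      Reachable P (baseFamily e x₀) (insert z₀ (downImage e b) ∪ E) := by
    intro b E hE
    rw [insert_union, ← union_insert]
    exact reachable_downImage_union hZ b (insert_subset hz₀Z (hE.trans hSZ.subset))
  refine reachable_of_minGadget hx hs₀ (h := fun w => insert z₀ (downImage e w))
    (fun w => disjoint_insert_left.2 ⟨hz₀S, (disjoint_downImage hZ w).mono_right hSZ.subset⟩)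
    (fun w _ => insert_nonempty _ _) (fun u v _ _ => ?_) (fun b _ _ => hpart b Subset.rfl)
    (fun b _ => hpart b (erase_subset _ _))
  rw [insert_subset_insert_iff (hz₀ u), downImage_subset_iff]

theorem reachable_of_not_subset (hZ : ∀ a, e a ∉ Z) (hZcard : 2 * Fintype.card P - 1 ≤ #Z)
    {X : Finset (Fin n)} (hZX : ¬ Z ⊆ X) : Reachable P (baseFamily e x₀) X := by
  suffices ∀ D X, X ⊆ Z ∪ D → ¬ Z ⊆ X → Reachable P (baseFamily e x₀) X from
    this univ X ((subset_univ X).trans subset_union_right) hZX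
  intro D
  induction D using Finset.induction_on with
  | empty =>
    intro X hX hZX
    exact reachable_of_ssubset hZ ⟨(union_empty Z) ▸ hX, hZX⟩
  | insert ν D _ ih =>
    rw [union_insert]
    by_cases hνC : ν ∈ Z ∪ D
    · rwa [insert_eq_of_mem hνC]
    intro X hX hZX
    by_cases hνX : ν ∈ X
    · rw [← insert_erase hνX]
      exact reachable_insert subset_union_left hνC hZcard ih (subset_insert_iff.1 hX)
        fun hZX' => hZX (hZX'.trans (erase_subset _ _))
    · exact ih X ((subset_insert_iff_of_notMem hνX).1 hX) hZX

theorem reachable_baseFamily (hZ : ∀ a, e a ∉ Z) (hZcard : 2 * Fintype.card P - 1 ≤ #Z)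
    (S : Finset (Fin n)) : Reachable P (baseFamily e x₀) S := by
  by_cases hZS : Z ⊆ S
  · by_cases hS : S = univ
    · exact .mem (hS ▸ mem_insert_of_mem (mem_insert_self _ _))
    · have := Fintype.card_pos (α := P)
      exact reachable_of_subset_of_ne_univ (by omega)
        (fun X hZX => reachable_of_not_subset hZ hZcard hZX) hZS hS
  · exact reachable_of_not_subset hZ hZcard hZS

theorem exists_isPercolating_card_eq (hn : 3 * Fintype.card P - 1 ≤ n) :
    ∃ 𝒜 : Finset (Finset (Fin n)), IsPercolating P 𝒜 ∧ #𝒜 = Fintype.card P + 1 := by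
  have hp := Fintype.card_pos (α := P)
  have hpn : Fintype.card P ≤ n := by omega
  let e : P ↪ Fin n := (Fintype.equivFin P).toEmbedding.trans (Fin.castLEEmb hpn)
  have hZ : ∀ a, e a ∉ (univ.map e)ᶜ := fun a => by simp
  have hZcard : #(univ.map e)ᶜ = n - Fintype.card P := by
    rw [card_compl, card_map, card_univ, Fintype.card_fin]
  refine ⟨baseFamily e (Classical.arbitrary P), isPercolating_of_forall_reachable
    (reachable_baseFamily hZ (by omega)), card_baseFamily hZ (card_pos.1 (by omega))⟩

end UpperBound

/-- If `P` is a (non-empty) finite poset with `p` elements having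
neither a greatest nor a least element, and `n ≥ 3p - 1`, then `sat_p(n, P) = p + 1`. -/
theorem statement15 (P : Type*) [PartialOrder P] [Fintype P] [Nonempty P]
    (htop : ¬ ∃ m : P, IsTop m) (hbot : ¬ ∃ m : P, IsBot m)
    (n : ℕ) (hn : 3 * Fintype.card P - 1 ≤ n) :
    satP P n = Fintype.card P + 1 := by
  obtain ⟨𝒜, h𝒜, hcard⟩ := exists_isPercolating_card_eq hn
  have hmem : Fintype.card P + 1 ∈
      {k | ∃ 𝒜 : Finset (Finset (Fin n)), IsPercolating P 𝒜 ∧ 𝒜.card = k} := ⟨𝒜, h𝒜, hcard⟩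
  have hp := Fintype.card_pos (α := P)
  refine le_antisymm (Nat.sInf_le hmem) (le_csInf ⟨_, hmem⟩ ?_)
  rintro k ⟨ℬ, hℬ, rfl⟩
  exact hℬ.card_lt_card htop hbot (by omega)
end
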